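/- arXiv:2106.02305 — 10 statements merged into one kernel-verified Lean document; each statement's English description precedes it below -/
import Mathlib

section
/- Let d, M ≥ 1, weights w_1, …, w_M > 0 with Σ_{i=1}^M w_i = 1, constants h_i ∈ (0,1), q_i > 0 and σ ≥ 0. For each i let T_i : ℝ^d → ℝ^d satisfy ‖T_i(x) − T_i(y)‖² ≤ h_i ‖x − y‖² for all x, y, let T = Σ_i w_i T_i and let x̃ be the unique fixed point of T. Fix x ∈ ℝ^d and let A_1, …, A_M be independent ℝ^d-valued random vectors with E[A_i] = T_i(x) and E‖A_i − T_i(x)‖² ≤ q_i σ². Then for any server step size α ∈ (0,1], the next iterate x⁺ = (1 − α)x + α Σ_{i=1}^M w_i A_i satisfies E‖x⁺ − x̃‖² ≤ [1 − α(1 − Σ_{i=1}^M w_i h_i)] ‖x − x̃‖² + α² σ² Σ_{i=1}^M w_i² q_i. -/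
open MeasureTheory ProbabilityTheory
open scoped RealInnerProductSpace

set_option maxHeartbeats 1000000 in
/-- One round of FedOpt with server step size α contracts the
expected squared distance to the fixed point, up to variance noise. -/
theorem fedopt_one_round_contraction
    (d M : ℕ) (hd : 1 ≤ d) (hM : 1 ≤ M)
    (w h q : Fin M → ℝ) (σ : ℝ)
    (hw : ∀ i, 0 < w i) (hw1 : ∑ i, w i = 1)
    (hh : ∀ i, 0 < h i ∧ h i < 1) (hq : ∀ i, 0 < q i) (hσ : 0 ≤ σ)
    (T : Fin M → EuclideanSpace ℝ (Fin d) → EuclideanSpace ℝ (Fin d))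
    (hT : ∀ i, ∀ x y, ‖T i x - T i y‖ ^ 2 ≤ h i * ‖x - y‖ ^ 2)
    (xt : EuclideanSpace ℝ (Fin d))
    (hfix : (∑ i, w i • T i xt) = xt)
    (x : EuclideanSpace ℝ (Fin d))
    {Ω : Type*} [MeasurableSpace Ω] (P : Measure Ω) [IsProbabilityMeasure P]
    (A : Fin M → Ω → EuclideanSpace ℝ (Fin d))
    (hmeas : ∀ i, Measurable (A i))
    (hindep : iIndepFun A P)
    (hint : ∀ i, Integrable (A i) P)
    (hmean : ∀ i, ∫ ω, A i ω ∂P = T i x)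
    (hvar : ∀ i, ∫ ω, ‖A i ω - T i x‖ ^ 2 ∂P ≤ q i * σ ^ 2)
    (α : ℝ) (hα : 0 < α) (hα1 : α ≤ 1) :
    ∫ ω, ‖((1 - α) • x + α • ∑ i, w i • A i ω) - xt‖ ^ 2 ∂P
      ≤ (1 - α * (1 - ∑ i, w i * h i)) * ‖x - xt‖ ^ 2
        + α ^ 2 * σ ^ 2 * ∑ i, w i ^ 2 * q i := by
  classical
  have hw0 : ∀ i, (0:ℝ) ≤ w i := fun i => (hw i).le
  set p : ℝ := ‖x - xt‖ with hp
  have hp0 : 0 ≤ p := norm_nonneg _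
  set S : ℝ := ∑ i, w i * h i with hS
  have hS0 : 0 ≤ S := Finset.sum_nonneg fun i _ => mul_nonneg (hw0 i) (hh i).1.le
  set B : Fin M → Ω → EuclideanSpace ℝ (Fin d) := fun i ω => A i ω - T i x with hBdef
  have hBmeas : ∀ i, Measurable (B i) := fun i => (hmeas i).sub measurable_const
  have hBint : ∀ i, Integrable (B i) P := fun i => (hint i).sub (integrable_const _)
  have hBmean : ∀ i, ∫ ω, B i ω ∂P = 0 := by
    intro i
    have h1 : ∫ ω, B i ω ∂P = (∫ ω, A i ω ∂P) - ∫ (_ : Ω), T i x ∂P :=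
      integral_sub (hint i) (integrable_const _)
    rw [h1, hmean i, integral_const]
    simp
  have hvar' : ∀ i, ∫ ω, ‖B i ω‖ ^ 2 ∂P ≤ q i * σ ^ 2 := fun i => hvar i
  set m : EuclideanSpace ℝ (Fin d) := ∑ i, w i • T i x with hm
  set Z : Ω → EuclideanSpace ℝ (Fin d) := fun ω => ∑ i, w i • B i ω with hZdef
  have hsummand : ∀ i, Integrable (fun ω => w i • B i ω) P := fun i => (hBint i).smul (w i)
  have hZint : Integrable Z P :=
    integrable_finset_sum _ fun i _ => hsummand i
  have hZmean : ∫ ω, Z ω ∂P = 0 := by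
    simp only [hZdef]
    rw [integral_finset_sum _ fun i _ => hsummand i]
    refine Finset.sum_eq_zero fun i _ => ?_
    rw [integral_smul, hBmean i, smul_zero]
  set v : EuclideanSpace ℝ (Fin d) := (1 - α) • (x - xt) + α • (m - xt) with hv
  -- deterministic bound on ‖v‖²
  have hmxt : m - xt = ∑ i, w i • (T i x - T i xt) := by
    conv_lhs => rw [hm, ← hfix]
    rw [← Finset.sum_sub_distrib]
    exact Finset.sum_congr rfl fun i _ => (smul_sub _ _ _).symm
  have hmb : ‖m - xt‖ ^ 2 ≤ S * p ^ 2 := by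
    have h1 : ‖m - xt‖ ≤ ∑ i, w i * ‖T i x - T i xt‖ := by
      rw [hmxt]
      refine (norm_sum_le _ _).trans (le_of_eq (Finset.sum_congr rfl fun i _ => ?_))
      rw [norm_smul, Real.norm_eq_abs, abs_of_nonneg (hw0 i)]
    have h2 : (∑ i, w i * ‖T i x - T i xt‖) ^ 2
        ≤ (∑ i, w i) * ∑ i, w i * ‖T i x - T i xt‖ ^ 2 := by
      have hcs := Finset.sum_mul_sq_le_sq_mul_sq Finset.univ (fun i => Real.sqrt (w i))
        (fun i => Real.sqrt (w i) * ‖T i x - T i xt‖)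
      calc (∑ i, w i * ‖T i x - T i xt‖) ^ 2
          = (∑ i, Real.sqrt (w i) * (Real.sqrt (w i) * ‖T i x - T i xt‖)) ^ 2 := by
            congr 1
            refine Finset.sum_congr rfl fun i _ => ?_
            rw [← mul_assoc, Real.mul_self_sqrt (hw0 i)]
        _ ≤ (∑ i, Real.sqrt (w i) ^ 2) * ∑ i, (Real.sqrt (w i) * ‖T i x - T i xt‖) ^ 2 := hcs
        _ = (∑ i, w i) * ∑ i, w i * ‖T i x - T i xt‖ ^ 2 := by
            congr 1
            · exact Finset.sum_congr rfl fun i _ => Real.sq_sqrt (hw0 i)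
            · refine Finset.sum_congr rfl fun i _ => ?_
              rw [mul_pow, Real.sq_sqrt (hw0 i)]
    have h3 : ∑ i, w i * ‖T i x - T i xt‖ ^ 2 ≤ S * p ^ 2 := by
      rw [hS, Finset.sum_mul]
      refine Finset.sum_le_sum fun i _ => ?_
      have := hT i x xt
      rw [mul_assoc]
      exact mul_le_mul_of_nonneg_left (by rw [hp]; exact this) (hw0 i)
    calc ‖m - xt‖ ^ 2 ≤ (∑ i, w i * ‖T i x - T i xt‖) ^ 2 := by
          apply pow_le_pow_left₀ (norm_nonneg _) h1
      _ ≤ (∑ i, w i) * ∑ i, w i * ‖T i x - T i xt‖ ^ 2 := h2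
      _ = ∑ i, w i * ‖T i x - T i xt‖ ^ 2 := by rw [hw1, one_mul]
      _ ≤ S * p ^ 2 := h3
  have hvb : ‖v‖ ^ 2 ≤ (1 - α * (1 - S)) * p ^ 2 := by
    have h1 : ‖v‖ ≤ (1 - α) * p + α * ‖m - xt‖ := by
      rw [hv]
      refine (norm_add_le _ _).trans ?_
      rw [norm_smul, norm_smul, Real.norm_eq_abs, Real.norm_eq_abs,
        abs_of_nonneg (by linarith : (0:ℝ) ≤ 1 - α), abs_of_nonneg hα.le, hp]
    nlinarith [norm_nonneg v, norm_nonneg (m - xt), sq_nonneg (p - ‖m - xt‖),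
      mul_nonneg (mul_nonneg hα.le (sub_nonneg.2 hα1)) (sq_nonneg (p - ‖m - xt‖))]
  -- pointwise decomposition
  have key : ∀ ω, ((1 - α) • x + α • ∑ i, w i • A i ω) - xt = v + α • Z ω := by
    intro ω
    have hsum : ∑ i, w i • A i ω = m + Z ω := by
      simp only [hm, hZdef, ← Finset.sum_add_distrib]
      refine Finset.sum_congr rfl fun i _ => ?_
      simp only [hBdef, smul_sub]
      abel
    rw [hsum, hv]
    module
  have expand : ∀ ω, ‖((1 - α) • x + α • ∑ i, w i • A i ω) - xt‖ ^ 2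
      = ‖v‖ ^ 2 + 2 * α * ⟪v, Z ω⟫ + α ^ 2 * ‖Z ω‖ ^ 2 := by
    intro ω
    rw [key ω, norm_add_sq_real, real_inner_smul_right, norm_smul]
    simp [mul_pow, sq_abs]
    ring
  have hsplit : ∀ (f : Fin M → Fin M → ℝ),
      ∑ i, ∑ j, f i j = ∑ i, f i i + ∑ i, ∑ j, if i = j then 0 else f i j := by
    intro f
    rw [← Finset.sum_add_distrib]
    refine Finset.sum_congr rfl fun i _ => ?_
    have h : ∀ j, f i j = (if i = j then f i j else 0) + (if i = j then 0 else f i j) := by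
      intro j; split <;> simp
    rw [Finset.sum_congr rfl fun j _ => h j, Finset.sum_add_distrib, Finset.sum_ite_eq]
    simp
  have hZsq : ∀ ω, ‖Z ω‖ ^ 2 = (∑ i, w i ^ 2 * ‖B i ω‖ ^ 2)
      + ∑ i, ∑ j, (if i = j then 0 else w i * w j * ⟪B i ω, B j ω⟫) := by
    intro ω
    have e1 : ‖Z ω‖ ^ 2 = ∑ i, ∑ j, w i * w j * ⟪B i ω, B j ω⟫ := by
      rw [← real_inner_self_eq_norm_sq]
      simp only [hZdef]
      rw [sum_inner]
      refine Finset.sum_congr rfl fun i _ => ?_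
      rw [inner_sum]
      refine Finset.sum_congr rfl fun j _ => ?_
      rw [real_inner_smul_left, real_inner_smul_right]; ring
    rw [e1, hsplit]
    congr 1
    refine Finset.sum_congr rfl fun i _ => ?_
    rw [real_inner_self_eq_norm_sq]; ring
  -- coordinates
  have hBcoordint : ∀ i k, Integrable (fun ω => B i ω k) P := fun i k =>
    (EuclideanSpace.proj k : EuclideanSpace ℝ (Fin d) →L[ℝ] ℝ).integrable_comp (hBint i)
  have hBcoordmean : ∀ i k, ∫ ω, B i ω k ∂P = 0 := by
    intro i k
    have h1 := (EuclideanSpace.proj k :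
      EuclideanSpace ℝ (Fin d) →L[ℝ] ℝ).integral_comp_comm (hBint i)
    rw [hBmean i] at h1
    simpa using h1
  have hBindep : ∀ i j, i ≠ j → ∀ k,
      IndepFun (fun ω => B i ω k) (fun ω => B j ω k) P := by
    intro i j hij k
    have h1 : IndepFun (A i) (A j) P := hindep.indepFun hij
    have hφ : ∀ c : EuclideanSpace ℝ (Fin d),
        Measurable (fun z : EuclideanSpace ℝ (Fin d) => (z - c) k) := fun c =>
      (measurable_pi_apply k).comp ((WithLp.measurable_ofLp 2 _).comp (measurable_id.sub measurable_const))
    exact h1.comp (hφ (T i x)) (hφ (T j x))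
  have hinner_eq : ∀ i j, (fun ω => (⟪B i ω, B j ω⟫ : ℝ))
      = fun ω => ∑ k, B i ω k * B j ω k := by
    intro i j; funext ω; rw [PiLp.inner_apply]; simp [RCLike.inner_apply]
    exact Finset.sum_congr rfl fun _ _ => mul_comm _ _
  have hprodint : ∀ i j, i ≠ j → ∀ k, Integrable (fun ω => B i ω k * B j ω k) P :=
    fun i j hij k => (hBindep i j hij k).integrable_mul (hBcoordint i k) (hBcoordint j k)
  have hoff_int : ∀ i j, i ≠ j → Integrable (fun ω => (⟪B i ω, B j ω⟫ : ℝ)) P := by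
    intro i j hij
    rw [hinner_eq i j]
    exact integrable_finset_sum _ fun k _ => hprodint i j hij k
  have hoff_mean : ∀ i j, i ≠ j → ∫ ω, (⟪B i ω, B j ω⟫ : ℝ) ∂P = 0 := by
    intro i j hij
    rw [hinner_eq i j]
    rw [integral_finset_sum _ fun k _ => hprodint i j hij k]
    refine Finset.sum_eq_zero fun k _ => ?_
    rw [(hBindep i j hij k).integral_fun_mul_eq_mul_integral (hBcoordint i k).1 (hBcoordint j k).1,
      hBcoordmean i k, hBcoordmean j k, mul_zero]
  -- the off-diagonal process
  set O : Ω → ℝ :=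
    fun ω => ∑ i, ∑ j, if i = j then 0 else w i * w j * ⟪B i ω, B j ω⟫ with hO
  have hOint : Integrable O P := by
    refine integrable_finset_sum _ fun i _ => integrable_finset_sum _ fun j _ => ?_
    by_cases hij : i = j
    · simp [hij]
    · simpa [hij, mul_assoc] using ((hoff_int i j hij).const_mul (w i * w j))
  have hOmean : ∫ ω, O ω ∂P = 0 := by
    simp only [hO]
    rw [integral_finset_sum _ fun i _ => integrable_finset_sum _ fun j _ => by
      by_cases hij : i = j
      · simp [hij]
      · simpa [hij, mul_assoc] using ((hoff_int i j hij).const_mul (w i * w j))]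
    · refine Finset.sum_eq_zero fun i _ => ?_
      rw [integral_finset_sum _ fun j _ => ?_]
      · refine Finset.sum_eq_zero fun j _ => ?_
        by_cases hij : i = j
        · simp [hij]
        · simp only [hij, if_false]
          rw [integral_const_mul, hoff_mean i j hij, mul_zero]
      · by_cases hij : i = j
        · simp [hij]
        · simpa [hij, mul_assoc] using ((hoff_int i j hij).const_mul (w i * w j))
  -- the linear term
  have hLint : Integrable (fun ω => (⟪v, Z ω⟫ : ℝ)) P := hZint.const_inner v
  have hLmean : ∫ ω, (⟪v, Z ω⟫ : ℝ) ∂P = 0 := by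
    rw [integral_inner hZint, hZmean, inner_zero_right]
  -- integrable part
  set F : Ω → ℝ := fun ω => ‖v‖ ^ 2 + 2 * α * ⟪v, Z ω⟫ + α ^ 2 * O ω with hF
  have hLint2 : Integrable (fun ω => 2 * α * (⟪v, Z ω⟫ : ℝ)) P := hLint.const_mul _
  have hOint2 : Integrable (fun ω => α ^ 2 * O ω) P := hOint.const_mul _
  have hFint1 : Integrable (fun ω => ‖v‖ ^ 2 + 2 * α * (⟪v, Z ω⟫ : ℝ)) P :=
    (integrable_const _).add hLint2
  have hFint : Integrable F P := hFint1.add hOint2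
  have hFmean : ∫ ω, F ω ∂P = ‖v‖ ^ 2 := by
    simp only [hF]
    rw [integral_add hFint1 hOint2,
      integral_add (integrable_const _) hLint2,
      integral_const, integral_const_mul, integral_const_mul, hLmean, hOmean]
    simp
  set D : Ω → ℝ := fun ω => ∑ i, w i ^ 2 * ‖B i ω‖ ^ 2 with hD
  have total : ∀ ω, ‖((1 - α) • x + α • ∑ i, w i • A i ω) - xt‖ ^ 2
      = F ω + α ^ 2 * D ω := by
    intro ω
    rw [expand ω, hZsq ω]
    simp only [hF, hO, hD]
    ring
  have goal_rw : ∫ ω, ‖((1 - α) • x + α • ∑ i, w i • A i ω) - xt‖ ^ 2 ∂P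
      = ∫ ω, (F ω + α ^ 2 * D ω) ∂P := integral_congr_ae (Filter.Eventually.of_forall total)
  rw [goal_rw]
  by_cases hL2 : ∀ i, Integrable (fun ω => ‖B i ω‖ ^ 2) P
  · -- main case : everything is square integrable
    have hterm2 : ∀ i, Integrable (fun ω => w i ^ 2 * ‖B i ω‖ ^ 2) P :=
      fun i => (hL2 i).const_mul _
    have hDint : Integrable D P :=
      integrable_finset_sum _ fun i _ => hterm2 i
    have hDint2 : Integrable (fun ω => α ^ 2 * D ω) P := hDint.const_mul _
    have step : ∫ ω, (F ω + α ^ 2 * D ω) ∂P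
        = ‖v‖ ^ 2 + α ^ 2 * ∑ i, w i ^ 2 * ∫ ω, ‖B i ω‖ ^ 2 ∂P := by
      rw [integral_add hFint hDint2, hFmean, integral_const_mul]
      congr 1
      simp only [hD]
      rw [integral_finset_sum _ fun i _ => hterm2 i]
      exact congrArg _ (Finset.sum_congr rfl fun i _ => integral_const_mul _ _)
    rw [step]
    have hsum_le : ∑ i, w i ^ 2 * ∫ ω, ‖B i ω‖ ^ 2 ∂P ≤ σ ^ 2 * ∑ i, w i ^ 2 * q i := by
      rw [Finset.mul_sum]
      refine Finset.sum_le_sum fun i _ => ?_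
      have := hvar' i
      nlinarith [sq_nonneg (w i)]
    calc ‖v‖ ^ 2 + α ^ 2 * ∑ i, w i ^ 2 * ∫ ω, ‖B i ω‖ ^ 2 ∂P
        ≤ (1 - α * (1 - S)) * p ^ 2 + α ^ 2 * (σ ^ 2 * ∑ i, w i ^ 2 * q i) :=
          add_le_add hvb (mul_le_mul_of_nonneg_left hsum_le (sq_nonneg α))
      _ = (1 - α * (1 - S)) * p ^ 2 + α ^ 2 * σ ^ 2 * ∑ i, w i ^ 2 * q i := by ring
  · -- degenerate case : the integrand is not integrable, so the integral is zero
    push_neg at hL2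
    obtain ⟨i₀, hi₀⟩ := hL2
    have hnotint : ¬ Integrable (fun ω => F ω + α ^ 2 * D ω) P := by
      intro hcon
      have h1 : Integrable (fun ω => α ^ 2 * D ω) P := by
        have h2 := hcon.sub hFint
        refine h2.congr (Filter.Eventually.of_forall fun ω => ?_)
        simp [Pi.sub_apply]
      have hDint : Integrable D P := by
        have h3 := h1.const_mul ((α ^ 2)⁻¹)
        have hα2 : (α:ℝ) ^ 2 ≠ 0 := pow_ne_zero _ hα.ne'
        simpa [← mul_assoc, inv_mul_cancel₀ hα2] using h3
      have hterm : Integrable (fun ω => w i₀ ^ 2 * ‖B i₀ ω‖ ^ 2) P := by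
        refine hDint.mono' ?_ (Filter.Eventually.of_forall fun ω => ?_)
        · exact (((hBmeas i₀).norm.pow_const 2).const_mul _).aestronglyMeasurable
        · rw [Real.norm_eq_abs, abs_of_nonneg (mul_nonneg (sq_nonneg _) (sq_nonneg _))]
          simp only [hD]
          exact Finset.single_le_sum
            (f := fun i => w i ^ 2 * ‖B i ω‖ ^ 2)
            (fun i _ => mul_nonneg (sq_nonneg _) (sq_nonneg _)) (Finset.mem_univ i₀)
      have hfin : Integrable (fun ω => ‖B i₀ ω‖ ^ 2) P := by
        have h4 := hterm.const_mul ((w i₀ ^ 2)⁻¹)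
        have hwi : (w i₀ : ℝ) ^ 2 ≠ 0 := pow_ne_zero _ (hw i₀).ne'
        simpa [← mul_assoc, inv_mul_cancel₀ hwi] using h4
      exact hi₀ hfin
    rw [integral_undef hnotint]
    have hcoef : 0 ≤ 1 - α * (1 - S) := by nlinarith
    have hq0 : 0 ≤ ∑ i, w i ^ 2 * q i :=
      Finset.sum_nonneg fun i _ => mul_nonneg (sq_nonneg _) (hq i).le
    have := mul_nonneg (mul_nonneg (sq_nonneg α) (sq_nonneg σ)) hq0
    nlinarith [mul_nonneg hcoef (sq_nonneg p)]
end

section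
/- Let h̄ ∈ (0,1), c ≥ 0, r₀ ≥ 0, and T ≥ 1. There exists a sequence of step sizes α_0, …, α_T ∈ (0,1] such that every nonnegative sequence (r_t)_{t=0}^{T+1} with r_0 = r₀ satisfying r_{t+1} ≤ (1 − α_t (1 − h̄)) r_t + α_t² c for all 0 ≤ t ≤ T also satisfies r_{T+1} ≤ (32 r₀ / (1 − h̄)) · h̄^{T/2} + 36 c / ((1 − h̄)² T). -/
private lemma step_ineq (μ B c x : ℝ) (hμ : 0 < μ) (hx : 2 ≤ x)
    (hB : 4 * c / μ ^ 2 ≤ B) (hc : 0 ≤ c) :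
    (1 - 2 / x) * (B / x) + (2 / (μ * x)) ^ 2 * c ≤ B / (x + 1) := by
  have hx0 : (0:ℝ) < x := by linarith
  have hμ2 : (0:ℝ) < μ ^ 2 := pow_pos hμ 2
  have hB0 : 0 ≤ B := le_trans (by positivity) hB
  have hB' : 4 * c ≤ B * μ ^ 2 := by
    rw [div_le_iff₀ hμ2] at hB; linarith
  have heq : (1 - 2 / x) * (B / x) + (2 / (μ * x)) ^ 2 * c
      = ((x - 2) * B * μ ^ 2 + 4 * c) / (μ ^ 2 * x ^ 2) := by
    field_simp; ring
  rw [heq, div_le_div_iff₀ (by positivity) (by linarith)]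
  nlinarith [mul_le_mul_of_nonneg_right hB' (show (0:ℝ) ≤ x + 1 by linarith),
    mul_nonneg (mul_nonneg hB0 hμ2.le) hx0.le]

set_option maxHeartbeats 1600000

/-- There is a choice of server step sizes turning the one-round
contraction-plus-noise recursion into the convergence rate of Theorem 1. -/
theorem stepsize_recursion_rate
    (hbar c r₀ : ℝ) (hh0 : 0 < hbar) (hh1 : hbar < 1) (hc : 0 ≤ c)
    (hr₀ : 0 ≤ r₀) (T : ℕ) (hT : 1 ≤ T) :
    ∃ α : ℕ → ℝ, (∀ t ≤ T, 0 < α t ∧ α t ≤ 1) ∧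
      ∀ r : ℕ → ℝ, (∀ t, 0 ≤ r t) → r 0 = r₀ →
        (∀ t ≤ T, r (t + 1) ≤ (1 - α t * (1 - hbar)) * r t + α t ^ 2 * c) →
        r (T + 1) ≤ (32 * r₀ / (1 - hbar)) * hbar ^ ((T : ℝ) / 2)
          + 36 * c / ((1 - hbar) ^ 2 * T) := by
  set μ : ℝ := 1 - hbar with hμdef
  clear_value μ
  have hμ : 0 < μ := by simp only [hμdef]; linarith
  have hμ1 : μ ≤ 1 := by simp only [hμdef]; linarith
  have hμ2 : (0:ℝ) < μ ^ 2 := pow_pos hμ 2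
  set a : ℝ := 2 / μ with hadef
  clear_value a
  have ha2 : 2 ≤ a := by rw [hadef, le_div_iff₀ hμ]; linarith
  have ha0 : 0 < a := by linarith
  have hμa : μ * a = 2 := by rw [hadef]; field_simp
  set t₀ : ℕ := (T + 1) / 2 with ht₀def
  clear_value t₀
  have ht₀T : t₀ ≤ T := by omega
  refine ⟨fun t => if t < t₀ then 1 else 2 / (μ * (a + ((t - t₀ : ℕ) : ℝ))), ?_, ?_⟩
  · intro t _
    by_cases h : t < t₀
    · simp [h]
    · simp only [h, if_false]
      have hs0 : (0:ℝ) ≤ ((t - t₀ : ℕ) : ℝ) := Nat.cast_nonneg _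
      have hax : 0 < a + ((t - t₀ : ℕ) : ℝ) := by linarith
      refine ⟨div_pos two_pos (mul_pos hμ hax), ?_⟩
      rw [div_le_one (mul_pos hμ hax)]
      nlinarith [mul_nonneg hμ.le hs0]
  · intro r hrnn hr0 hrec
    -- Phase 1 : geometric decay with α = 1
    have phase1 : ∀ t ≤ t₀, r t ≤ hbar ^ t * r₀ + c / μ := by
      intro t
      induction t with
      | zero =>
        intro _
        rw [hr0, pow_zero, one_mul]
        have : 0 ≤ c / μ := by positivity
        linarith
      | succ n ih =>
        intro hn
        have hn' : n < t₀ := by omega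
        have h1 := hrec n (by omega)
        simp only [hn', if_true] at h1
        have h2 := ih (by omega)
        have hbar0 : 0 ≤ hbar := hh0.le
        calc r (n + 1) ≤ (1 - 1 * μ) * r n + 1 ^ 2 * c := h1
          _ = hbar * r n + c := by rw [hμdef]; ring
          _ ≤ hbar * (hbar ^ n * r₀ + c / μ) + c := by nlinarith
          _ = hbar ^ (n + 1) * r₀ + ((1 - μ) * (c / μ) + c) := by
              rw [hμdef]; ring
          _ = hbar ^ (n + 1) * r₀ + c / μ := by
              congr 1; field_simp; ring
    -- Phase 2 : decaying step sizes
    set B : ℝ := a * r t₀ + 4 * c / μ ^ 2 with hBdef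
    clear_value B
    have hB4 : 4 * c / μ ^ 2 ≤ B := by
      have := hrnn t₀
      nlinarith
    have phase2 : ∀ s : ℕ, t₀ + s ≤ T + 1 → r (t₀ + s) ≤ B / (a + (s : ℝ)) := by
      intro s
      induction s with
      | zero =>
        intro _
        simp only [Nat.add_zero, Nat.cast_zero, add_zero]
        rw [le_div_iff₀ ha0]
        have h0 : 0 ≤ 4 * c / μ ^ 2 := by positivity
        have := mul_comm (r t₀) a
        rw [hBdef]; linarith
      | succ s ih =>
        intro hs
        have hlt : ¬ (t₀ + s < t₀) := by omega
        have h1 := hrec (t₀ + s) (by omega)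
        simp only [hlt, if_false, Nat.add_sub_cancel_left] at h1
        have hs0 : (0:ℝ) ≤ (s:ℝ) := Nat.cast_nonneg _
        have hx2 : 2 ≤ a + (s : ℝ) := by linarith
        have hx0 : (0:ℝ) < a + (s : ℝ) := by linarith
        have halpha : 2 / (μ * (a + (s:ℝ))) * μ = 2 / (a + (s:ℝ)) := by
          field_simp
        rw [halpha] at h1
        have h2 := ih (by omega)
        have h12 : 0 ≤ 1 - 2 / (a + (s:ℝ)) := by
          rw [sub_nonneg, div_le_one hx0]; linarith
        have hstep := step_ineq μ B c (a + (s:ℝ)) hμ hx2 hB4 hc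
        have hmain : r (t₀ + s + 1) ≤ B / (a + (s:ℝ) + 1) :=
          le_trans (le_trans h1
            (add_le_add_left (mul_le_mul_of_nonneg_left h2 h12) _)) hstep
        have hcast : (↑(s + 1) : ℝ) = (s:ℝ) + 1 := by push_cast; ring
        rw [show t₀ + (s + 1) = t₀ + s + 1 from rfl, hcast, ← add_assoc]
        exact hmain
    -- conclude
    set L : ℕ := T + 1 - t₀ with hLdef
    clear_value L
    have hLsum : t₀ + L = T + 1 := by omega
    have hfin := phase2 L (by omega)
    rw [hLsum] at hfin
    have hL2 : (T:ℝ) ≤ 2 * (L:ℝ) := by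
      have : T ≤ 2 * L := by omega
      exact_mod_cast this
    have hL1 : (1:ℝ) ≤ (L:ℝ) := by
      have : 1 ≤ L := by omega
      exact_mod_cast this
    have hT1 : (1:ℝ) ≤ (T:ℝ) := by exact_mod_cast hT
    have hT0 : (0:ℝ) < (T:ℝ) := by linarith
    have hL0 : (0:ℝ) < (L:ℝ) := by linarith
    have ht₀half : (T:ℝ) / 2 ≤ (t₀:ℝ) := by
      have : T ≤ 2 * t₀ := by omega
      have h' : (T:ℝ) ≤ 2 * (t₀:ℝ) := by exact_mod_cast this
      linarith
    set P : ℝ := hbar ^ ((T:ℝ) / 2) with hPdef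
    clear_value P
    have hP0 : 0 ≤ P := by
      rw [hPdef]; exact Real.rpow_nonneg hh0.le _
    have hQP : hbar ^ t₀ ≤ P := by
      rw [hPdef, ← Real.rpow_natCast hbar t₀]
      exact Real.rpow_le_rpow_of_exponent_ge hh0 hh1.le ht₀half
    have hQ0 : 0 ≤ hbar ^ t₀ := by positivity
    have hrt₀ := phase1 t₀ le_rfl
    have haμ : a * (c / μ) = 2 * c / μ ^ 2 := by
      rw [hadef, div_mul_div_comm, ← pow_two]
    have hBle : B ≤ a * (hbar ^ t₀ * r₀) + 6 * c / μ ^ 2 := by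
      have h := mul_le_mul_of_nonneg_left hrt₀ ha0.le
      rw [mul_add, haμ] at h
      have h6 : 2 * c / μ ^ 2 + 4 * c / μ ^ 2 = 6 * c / μ ^ 2 := by ring
      rw [hBdef]; linarith
    have haL0 : (0:ℝ) < a + (L:ℝ) := by linarith
    have hsplit : B / (a + (L:ℝ)) ≤ hbar ^ t₀ * r₀ + 6 * c / (μ ^ 2 * (L:ℝ)) := by
      have h1 : B / (a + (L:ℝ)) ≤ (a * (hbar ^ t₀ * r₀) + 6 * c / μ ^ 2) / (a + (L:ℝ)) := by
        rw [div_eq_mul_inv, div_eq_mul_inv (a * (hbar ^ t₀ * r₀) + 6 * c / μ ^ 2)]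
        exact mul_le_mul_of_nonneg_right hBle (inv_nonneg.mpr haL0.le)
      have h2 : (a * (hbar ^ t₀ * r₀) + 6 * c / μ ^ 2) / (a + (L:ℝ))
          = a * (hbar ^ t₀ * r₀) / (a + (L:ℝ)) + (6 * c / μ ^ 2) / (a + (L:ℝ)) := by
        rw [add_div]
      have h3 : a * (hbar ^ t₀ * r₀) / (a + (L:ℝ)) ≤ hbar ^ t₀ * r₀ := by
        rw [div_le_iff₀ haL0]
        nlinarith [mul_nonneg hQ0 hr₀]
      have h4 : (6 * c / μ ^ 2) / (a + (L:ℝ)) ≤ 6 * c / (μ ^ 2 * (L:ℝ)) := by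
        rw [div_div]
        apply div_le_div_of_nonneg_left (by linarith) (mul_pos hμ2 hL0)
        nlinarith [mul_nonneg hμ2.le hL0.le]
      linarith
    have h32 : (1:ℝ) ≤ 32 / μ := by
      rw [le_div_iff₀ hμ]; linarith
    have hterm1 : hbar ^ t₀ * r₀ ≤ 32 * r₀ / μ * P := by
      have ha' : hbar ^ t₀ * r₀ ≤ P * r₀ := mul_le_mul_of_nonneg_right hQP hr₀
      have h' : P * r₀ * 1 ≤ P * r₀ * (32 / μ) :=
        mul_le_mul_of_nonneg_left h32 (mul_nonneg hP0 hr₀)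
      calc hbar ^ t₀ * r₀ ≤ P * r₀ := ha'
        _ = P * r₀ * 1 := by ring
        _ ≤ P * r₀ * (32 / μ) := h'
        _ = 32 * r₀ / μ * P := by ring
    have hterm2 : 6 * c / (μ ^ 2 * (L:ℝ)) ≤ 36 * c / (μ ^ 2 * (T:ℝ)) := by
      rw [div_le_div_iff₀ (mul_pos hμ2 hL0) (mul_pos hμ2 hT0)]
      have hx := mul_le_mul_of_nonneg_left hL2
        (show (0:ℝ) ≤ 6 * c * μ ^ 2 by positivity)
      have hy : 0 ≤ c * μ ^ 2 * (L:ℝ) := by positivity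
      nlinarith [hx, hy]
    calc r (T + 1) ≤ B / (a + (L:ℝ)) := hfin
      _ ≤ hbar ^ t₀ * r₀ + 6 * c / (μ ^ 2 * (L:ℝ)) := hsplit
      _ ≤ 32 * r₀ / μ * P + 36 * c / (μ ^ 2 * (T:ℝ)) := by linarith
end

section
/- Let a > 0, b > 0, c ≥ 0 and d > 0 with d ≥ a, let T ≥ 1 and r₀ ≥ 0. There exist step sizes γ_0, …, γ_T ∈ (0, 1/d] and nonnegative weights w_0, …, w_T with W_T := Σ_{t=0}^T w_t > 0 such that every pair of nonnegative sequences (r_t)_{t=0}^{T+1}, (s_t)_{t=0}^{T} with r_0 = r₀ satisfying r_{t+1} ≤ (1 − a γ_t) r_t − b γ_t s_t + c γ_t² for all 0 ≤ t ≤ T also satisfies (b / W_T) Σ_{t=0}^T w_t s_t + a r_{T+1} ≤ 32 d r₀ (1 − a/d)^{T/2} + 36 c / (a T), and hence also ≤ 32 d r₀ exp(−aT/(2d)) + 36 c / (a T). -/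
open Finset in
lemma stich_geom_aux (q : ℝ) (hq0 : 0 ≤ q) (hq1 : q < 1) (n : ℕ) :
    ∑ k ∈ range n, q ^ k ≤ 1 / (1 - q) := by
  have h1 : (0:ℝ) < 1 - q := by linarith
  rw [le_div_iff₀ h1]
  have h2 := geom_sum_mul q n
  nlinarith [pow_nonneg hq0 n]

lemma stich_pow_le_rpow_half (q : ℝ) (hq0 : 0 ≤ q) (hq1 : q ≤ 1)
    (m T : ℕ) (hm : 1 ≤ m) (hTm : (T:ℝ)/2 ≤ m) :
    q ^ m ≤ q ^ ((T:ℝ)/2) := by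
  rcases eq_or_lt_of_le hq0 with h0 | h0
  · rw [← h0, zero_pow (by omega : m ≠ 0)]
    exact Real.rpow_nonneg le_rfl _
  · calc q ^ m = q ^ (m:ℝ) := (Real.rpow_natCast q m).symm
      _ ≤ q ^ ((T:ℝ)/2) := Real.rpow_le_rpow_of_exponent_ge h0 hq1 hTm

lemma stich_rpow_le_exp (a d : ℝ) (ha : 0 < a) (hd : 0 < d) (had : a ≤ d) (T : ℕ) :
    (1 - a / d) ^ ((T:ℝ)/2) ≤ Real.exp (-(a * T) / (2 * d)) := by
  have h0 : 0 ≤ 1 - a / d := by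
    have : a / d ≤ 1 := (div_le_one hd).mpr had
    linarith
  have h1 : 1 - a / d ≤ Real.exp (-(a/d)) := by
    have := Real.add_one_le_exp (-(a/d)); linarith
  have h2 : -(a/d) * ((T:ℝ)/2) = -(a*T)/(2*d) := by field_simp
  calc (1 - a/d) ^ ((T:ℝ)/2) ≤ (Real.exp (-(a/d))) ^ ((T:ℝ)/2) :=
        Real.rpow_le_rpow h0 h1 (by positivity)
    _ = Real.exp (-(a*T)/(2*d)) := by rw [← Real.exp_mul, h2]

open Finset in
set_option maxHeartbeats 4000000 in
private theorem stich_case2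
    (a b c d : ℝ) (ha : 0 < a) (hb : 0 < b) (hc : 0 ≤ c) (hd : 0 < d)
    (hda : a ≤ d) (T : ℕ) (hT : 1 ≤ T) (r₀ : ℝ) (hr₀ : 0 ≤ r₀)
    (hq0 : (0:ℝ) ≤ 1 - a / d) (hq1 : 1 - a / d < 1) (hT0 : (0:ℝ) < T)
    (hcase : 2 * d < a * T) :
    ∃ (γ : ℕ → ℝ) (w : ℕ → ℝ),
      (∀ t ≤ T, 0 < γ t ∧ γ t ≤ 1 / d) ∧
      (∀ t ≤ T, 0 ≤ w t) ∧ 0 < ∑ t ∈ Finset.range (T + 1), w t ∧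
      ∀ (r s : ℕ → ℝ), (∀ t, 0 ≤ r t) → (∀ t, 0 ≤ s t) → r 0 = r₀ →
        (∀ t ≤ T, r (t + 1) ≤ (1 - a * γ t) * r t - b * γ t * s t + c * γ t ^ 2) →
        (b / ∑ t ∈ Finset.range (T + 1), w t) *
            (∑ t ∈ Finset.range (T + 1), w t * s t) + a * r (T + 1)
          ≤ 32 * d * r₀ * (1 - a / d) ^ ((T : ℝ) / 2) + 36 * c / (a * T) := by
  set t₀ := (T+1)/2 with ht₀def
  set n := T + 1 - t₀ with hndef
  have htn : t₀ + n = T + 1 := by omega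
  have ht₀1 : 1 ≤ t₀ := by omega
  have ht₀T : t₀ ≤ T := by omega
  have hn1 : 1 ≤ n := by omega
  have h2t₀ : T ≤ 2 * t₀ := by omega
  have h2n : T ≤ 2 * n := by omega
  have hnR : (1:ℝ) ≤ (n:ℝ) := by exact_mod_cast hn1
  have hTn : (T:ℝ) ≤ 2 * n := by exact_mod_cast h2n
  have hTt₀ : (T:ℝ) ≤ 2 * t₀ := by exact_mod_cast h2t₀
  set κ : ℝ := 2 * d / a with hκdef
  have hκ2 : (2:ℝ) ≤ κ := by
    rw [hκdef, le_div_iff₀ ha]; linarith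
  have hκa : a * κ = 2 * d := by rw [hκdef]; field_simp
  have hWeq : (∑ t ∈ range (T+1), (if t < t₀ then (0:ℝ) else κ + ((t - t₀ : ℕ):ℝ)))
      = ∑ i ∈ range n, (κ + (i:ℝ)) := by
    rw [Finset.range_eq_Ico,
      ← Finset.sum_Ico_consecutive _ (Nat.zero_le t₀) (by omega : t₀ ≤ T+1)]
    have h1 : ∑ t ∈ Finset.Ico 0 t₀, (if t < t₀ then (0:ℝ) else κ + ((t - t₀ : ℕ):ℝ)) = 0 := by
      apply Finset.sum_eq_zero
      intro t ht
      rw [Finset.mem_Ico] at ht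
      rw [if_pos ht.2]
    rw [h1, zero_add, Finset.sum_Ico_eq_sum_range]
    apply Finset.sum_congr (by rw [hndef, Finset.range_eq_Ico])
    intro i _
    rw [if_neg (by omega), Nat.add_sub_cancel_left]
  have hWlow : ∀ m : ℕ, ((m:ℝ))^2/2 ≤ ∑ i ∈ range m, (κ + (i:ℝ)) := by
    intro m
    induction m with
    | zero => simp
    | succ k ih =>
      rw [Finset.sum_range_succ]
      push_cast
      nlinarith [Nat.cast_nonneg (α := ℝ) k]
  have hWhigh : ∀ m : ℕ, ∑ i ∈ range m, (κ + (i:ℝ)) ≤ m * (κ + m - 1) := by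
    intro m
    induction m with
    | zero => norm_num
    | succ k ih =>
      rw [Finset.sum_range_succ]
      push_cast
      nlinarith [Nat.cast_nonneg (α := ℝ) k]
  have hWn : ((n:ℝ))^2/2 ≤ ∑ i ∈ range n, (κ + (i:ℝ)) := hWlow n
  have hWT : (T:ℝ)^2/8 ≤ ∑ i ∈ range n, (κ + (i:ℝ)) := by nlinarith
  have hW0 : (0:ℝ) < ∑ i ∈ range n, (κ + (i:ℝ)) := by nlinarith
  have hWup : ∑ i ∈ range n, (κ + (i:ℝ)) ≤ (κ + n - 1)^2 := by
    have h := hWhigh n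
    nlinarith
  refine ⟨fun t => if t < t₀ then 1/d else 2/(a * (κ + ((t - t₀ : ℕ) : ℝ))),
          fun t => if t < t₀ then 0 else κ + ((t - t₀ : ℕ) : ℝ), ?_, ?_, ?_, ?_⟩
  · intro t _
    by_cases h : t < t₀
    · simp only [if_pos h]
      exact ⟨by positivity, le_rfl⟩
    · simp only [if_neg h]
      have hi : (0:ℝ) ≤ ((t - t₀ : ℕ) : ℝ) := Nat.cast_nonneg _
      have hden : 0 < a * (κ + ((t - t₀ : ℕ) : ℝ)) := mul_pos ha (by linarith)
      constructor
      · positivity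
      · rw [div_le_div_iff₀ hden hd]
        nlinarith
  · intro t _
    by_cases h : t < t₀
    · simp only [if_pos h]; exact le_rfl
    · simp only [if_neg h]
      have hi : (0:ℝ) ≤ ((t - t₀ : ℕ) : ℝ) := Nat.cast_nonneg _
      linarith
  all_goals {
    first
    | -- goal: 0 < ∑ w t
      (exact hWeq ▸ hW0)
    | -- main goal
      ( intro r s hr hs hr0 hrec
        rw [hWeq]
        set W := ∑ i ∈ range n, (κ + (i:ℝ)) with hWdef
        set X := (1 - a/d) ^ ((T:ℝ)/2) with hXdef
        have hX0 : 0 ≤ X := Real.rpow_nonneg hq0 _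
        have hqt : (1 - a/d)^t₀ ≤ X := by
          rw [hXdef]
          exact stich_pow_le_rpow_half _ hq0 hq1.le t₀ T ht₀1 (by linarith)
        -- Phase 1
        have hgeom : ∀ m : ℕ, ∑ j ∈ range m, (1 - a/d)^j ≤ d / a := by
          intro m
          have := stich_geom_aux (1 - a/d) hq0 hq1 m
          have he : 1 / (1 - (1 - a/d)) = d / a := by
            rw [show 1 - (1 - a/d) = a/d by ring, one_div_div]
          rw [he] at this
          exact this
        have phase1 : ∀ m, m ≤ t₀ →
            r m ≤ (1 - a/d)^m * r 0 + c * (1/d)^2 * ∑ j ∈ range m, (1 - a/d)^j := by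
          intro m
          induction m with
          | zero => intro _; simp
          | succ k ih =>
            intro hk
            have hkt : k < t₀ := by omega
            have ihk := ih (by omega)
            have hrk : r (k+1) ≤ (1 - a * (1/d)) * r k - b * (1/d) * s k + c * (1/d)^2 := by
              have h := hrec k (by omega)
              simpa only [if_pos hkt] using h
            have hbs : 0 ≤ b * (1/d) * s k := by
              have := hs k; positivity
            have hmul := mul_le_mul_of_nonneg_left ihk hq0
            have e : (1 - a * (1/d)) * r k = (1 - a/d) * r k := by ring
            calc r (k+1) ≤ (1 - a/d) * r k + c * (1/d)^2 := by linarith [hrk, hbs, e]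
              _ ≤ (1 - a/d) * ((1 - a/d)^k * r 0
                    + c * (1/d)^2 * ∑ j ∈ range k, (1 - a/d)^j) + c * (1/d)^2 := by
                  linarith [hmul]
              _ = (1 - a/d)^(k+1) * r 0
                    + c * (1/d)^2 * ∑ j ∈ range (k+1), (1 - a/d)^j := by
                  rw [geom_sum_succ, pow_succ]; ring
        have hret0 : r t₀ ≤ (1 - a/d)^t₀ * r₀ + c/(a*d) := by
          have h := phase1 t₀ le_rfl
          have hg := hgeom t₀
          have h2 : c * (1/d)^2 * ∑ j ∈ range t₀, (1 - a/d)^j ≤ c * (1/d)^2 * (d/a) :=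
            mul_le_mul_of_nonneg_left hg (by positivity)
          have he : c * (1/d)^2 * (d/a) = c/(a*d) := by field_simp
          rw [hr0] at h
          linarith
        -- Phase 2 telescoping
        have key2 : ∀ m, t₀ + m ≤ T + 1 →
            b * (∑ t ∈ range (t₀ + m),
                (if t < t₀ then (0:ℝ) else κ + ((t - t₀ : ℕ):ℝ)) * s t)
              + (a/2) * (κ + (m:ℝ) - 1)^2 * r (t₀ + m)
            ≤ (a/2) * (κ - 1)^2 * r t₀ + (2*c/a) * m := by
          intro m
          induction m with
          | zero =>
            intro _
            have hz : ∑ t ∈ range t₀,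
                (if t < t₀ then (0:ℝ) else κ + ((t - t₀ : ℕ):ℝ)) * s t = 0 := by
              apply Finset.sum_eq_zero
              intro t ht
              rw [if_pos (Finset.mem_range.mp ht), zero_mul]
            simp only [Nat.add_zero, Nat.cast_zero, add_zero, mul_zero, hz]
            ring_nf
            linarith [le_refl ((a/2) * (κ - 1)^2 * r t₀)]
          | succ m ih =>
            intro hm
            have hmT : t₀ + m ≤ T := by omega
            have ihm := ih (by omega)
            have hlt : ¬ (t₀ + m < t₀) := by omega
            have hγ : r (t₀ + m + 1) ≤ (1 - a * (2/(a*(κ + (m:ℝ))))) * r (t₀+m)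
                - b * (2/(a*(κ + (m:ℝ)))) * s (t₀+m) + c * (2/(a*(κ + (m:ℝ))))^2 := by
              have h := hrec (t₀+m) hmT
              simpa only [if_neg hlt, Nat.add_sub_cancel_left] using h
            have hm0 : (0:ℝ) ≤ (m:ℝ) := Nat.cast_nonneg m
            have hκm : (0:ℝ) < κ + (m:ℝ) := by linarith
            have hmul := mul_le_mul_of_nonneg_left hγ
              (by positivity : (0:ℝ) ≤ (a/2) * (κ + (m:ℝ))^2)
            have e1 : (a/2) * (κ + (m:ℝ))^2 *
                ((1 - a * (2/(a*(κ + (m:ℝ))))) * r (t₀+m)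
                  - b * (2/(a*(κ + (m:ℝ)))) * s (t₀+m) + c * (2/(a*(κ + (m:ℝ))))^2)
                = (a/2) * ((κ + (m:ℝ)) * (κ + (m:ℝ) - 2)) * r (t₀+m)
                  - b * (κ + (m:ℝ)) * s (t₀+m) + 2*c/a := by
              field_simp
            rw [e1] at hmul
            have e2 : (a/2) * ((κ + (m:ℝ)) * (κ + (m:ℝ) - 2)) * r (t₀+m)
                ≤ (a/2) * (κ + (m:ℝ) - 1)^2 * r (t₀+m) := by
              apply mul_le_mul_of_nonneg_right _ (hr _)
              nlinarith
            rw [show t₀ + (m+1) = (t₀ + m) + 1 from rfl, Finset.sum_range_succ,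
              if_neg hlt, Nat.add_sub_cancel_left]
            push_cast
            ring_nf at ihm hmul e2 ⊢
            linarith
        have hkey := key2 n (by omega)
        rw [htn] at hkey
        set S := ∑ t ∈ range (T+1),
          (if t < t₀ then (0:ℝ) else κ + ((t - t₀ : ℕ):ℝ)) * s t with hSdef
        have hS0 : 0 ≤ S := by
          apply Finset.sum_nonneg
          intro t _
          by_cases h : t < t₀
          · rw [if_pos h, zero_mul]
          · rw [if_neg h]
            have hi : (0:ℝ) ≤ ((t - t₀ : ℕ) : ℝ) := Nat.cast_nonneg _
            have := hs t
            nlinarith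
        -- combine
        have h1 : b * S + a * r (T+1) * W
            ≤ a * (κ-1)^2 * r t₀ + (4*c/a) * n := by
          have hbS : 0 ≤ b * S := mul_nonneg hb.le hS0
          have hWup2 : (a/2) * W ≤ (a/2) * (κ + n - 1)^2 :=
            mul_le_mul_of_nonneg_left hWup (by positivity)
          have hKR : (a/2) * W * r (T+1) ≤ (a/2) * (κ + (n:ℝ) - 1)^2 * r (T+1) :=
            mul_le_mul_of_nonneg_right hWup2 (hr _)
          ring_nf at hkey hKR ⊢
          linarith
        have hgoalmul : (b/W) * S + a * r (T+1) = (b * S + a * r (T+1) * W)/W := by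
          rw [div_mul_eq_mul_div, add_div, mul_div_assoc (a * r (T+1)),
            div_self hW0.ne', mul_one]
        rw [hgoalmul, div_le_iff₀ hW0]
        have hTR : (1:ℝ) ≤ (T:ℝ) := by exact_mod_cast hT
        -- bound a(κ-1)² r t₀
        have hcoef : a * (κ-1)^2 ≤ 4*d^2/a := by
          have e : a * κ^2 = 4*d^2/a := by
            rw [hκdef]; field_simp; ring
          nlinarith [e, hκ2, mul_pos ha (show (0:ℝ) < 2*κ-1 by linarith)]
        have p1 : a * (κ-1)^2 * r t₀
            ≤ (4*d^2/a) * ((1 - a/d)^t₀ * r₀) + (4*d^2/a) * (c/(a*d)) := by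
          calc a * (κ-1)^2 * r t₀ ≤ (4*d^2/a) * r t₀ :=
                mul_le_mul_of_nonneg_right hcoef (hr _)
            _ ≤ (4*d^2/a) * ((1 - a/d)^t₀ * r₀ + c/(a*d)) :=
                mul_le_mul_of_nonneg_left hret0 (by positivity)
            _ = (4*d^2/a) * ((1 - a/d)^t₀ * r₀) + (4*d^2/a) * (c/(a*d)) := by ring
        have hq0t : (0:ℝ) ≤ (1 - a/d)^t₀ := pow_nonneg hq0 _
        have q1 : (4*d^2/a) * ((1 - a/d)^t₀ * r₀) ≤ 16*d*r₀*X*W := by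
          have e : 4*d^2/a ≤ 2*d*(T:ℝ) := by
            rw [div_le_iff₀ ha]
            nlinarith
          have hdxr : (0:ℝ) ≤ d * X * r₀ := by positivity
          have h8 : 2*(T:ℝ) ≤ 16*W := by nlinarith
          calc (4*d^2/a) * ((1 - a/d)^t₀ * r₀)
              ≤ (2*d*(T:ℝ)) * ((1 - a/d)^t₀ * r₀) :=
                mul_le_mul_of_nonneg_right e (mul_nonneg hq0t hr₀)
            _ ≤ (2*d*(T:ℝ)) * (X * r₀) :=
                mul_le_mul_of_nonneg_left
                  (mul_le_mul_of_nonneg_right hqt hr₀) (by positivity)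
            _ ≤ 16*d*r₀*X*W := by
                nlinarith [mul_le_mul_of_nonneg_right h8 hdxr]
        have q2 : (4*d^2/a) * (c/(a*d)) ≤ 16*c/(a*T)*W := by
          have e : (4*d^2/a) * (c/(a*d)) = 4*d*c/a^2 := by
            field_simp
          have e2 : 16*c/(a*(T:ℝ))*W = 16*c*W/(a*T) := by ring
          rw [e, e2, div_le_div_iff₀ (by positivity) (by positivity)]
          nlinarith [mul_le_mul_of_nonneg_left hcase.le
              (mul_nonneg hc (mul_nonneg ha.le hT0.le)),
            mul_le_mul_of_nonneg_left hWT
              (mul_nonneg (mul_nonneg hc ha.le) ha.le)]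
        have q3 : (4*c/a) * (n:ℝ) ≤ 16*c/(a*T)*W := by
          have e : (4*c/a) * (n:ℝ) = 4*c*(n:ℝ)/a := by ring
          have e2 : 16*c/(a*(T:ℝ))*W = 16*c*W/(a*T) := by ring
          rw [e, e2, div_le_div_iff₀ ha (by positivity)]
          nlinarith [mul_le_mul_of_nonneg_left hWn hc,
            mul_le_mul_of_nonneg_left hTn (mul_nonneg hc (Nat.cast_nonneg (α:=ℝ) n))]
        have hXW : 0 ≤ d*r₀*X*W := by positivity
        have hcW : 0 ≤ c/(a*(T:ℝ))*W := by positivity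
        ring_nf at h1 p1 q1 q2 q3 hXW hcW ⊢
        linarith )
  }

open Finset in
set_option maxHeartbeats 1000000 in
/-- Stich's step-size and weighting lemma for one-step
contraction-plus-noise recursions. -/
theorem stich_recursion_lemma
    (a b c d : ℝ) (ha : 0 < a) (hb : 0 < b) (hc : 0 ≤ c) (hd : 0 < d)
    (hda : a ≤ d) (T : ℕ) (hT : 1 ≤ T) (r₀ : ℝ) (hr₀ : 0 ≤ r₀) :
    ∃ (γ : ℕ → ℝ) (w : ℕ → ℝ),
      (∀ t ≤ T, 0 < γ t ∧ γ t ≤ 1 / d) ∧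
      (∀ t ≤ T, 0 ≤ w t) ∧ 0 < ∑ t ∈ Finset.range (T + 1), w t ∧
      ∀ (r s : ℕ → ℝ), (∀ t, 0 ≤ r t) → (∀ t, 0 ≤ s t) → r 0 = r₀ →
        (∀ t ≤ T, r (t + 1) ≤ (1 - a * γ t) * r t - b * γ t * s t + c * γ t ^ 2) →
        (b / ∑ t ∈ Finset.range (T + 1), w t) *
            (∑ t ∈ Finset.range (T + 1), w t * s t) + a * r (T + 1)
          ≤ 32 * d * r₀ * (1 - a / d) ^ ((T : ℝ) / 2) + 36 * c / (a * T) ∧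
        (b / ∑ t ∈ Finset.range (T + 1), w t) *
            (∑ t ∈ Finset.range (T + 1), w t * s t) + a * r (T + 1)
          ≤ 32 * d * r₀ * Real.exp (-(a * T) / (2 * d)) + 36 * c / (a * T) := by
  have hq0 : (0:ℝ) ≤ 1 - a / d := by
    have : a / d ≤ 1 := (div_le_one hd).mpr hda
    linarith
  have hq1 : 1 - a / d < 1 := by
    have : 0 < a / d := by positivity
    linarith
  have hT0 : (0:ℝ) < T := by exact_mod_cast Nat.pos_of_ne_zero (by omega)
  have hexp : ∀ X : ℝ, X ≤ 32 * d * r₀ * (1 - a / d) ^ ((T : ℝ) / 2) + 36 * c / (a * T) →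
      X ≤ 32 * d * r₀ * Real.exp (-(a * T) / (2 * d)) + 36 * c / (a * T) := by
    intro X hX
    refine hX.trans ?_
    have h1 := stich_rpow_le_exp a d ha hd hda T
    have h2 : (0:ℝ) ≤ 32 * d * r₀ := by positivity
    nlinarith
  by_cases hcase : a * T ≤ 2 * d
  · -- constant step size 1/d
    refine ⟨fun _ => 1/d, fun t => (1 - a/d) ^ (T - t), ?_, ?_, ?_, ?_⟩
    · intro t _; exact ⟨by positivity, le_rfl⟩
    · intro t _; positivity
    · have h1 : (1:ℝ) ≤ ∑ t ∈ range (T+1), (1 - a/d) ^ (T - t) := by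
        have := Finset.single_le_sum (f := fun t => (1 - a/d) ^ (T - t))
          (fun i _ => by positivity) (Finset.self_mem_range_succ T)
        simpa using this
      linarith
    · intro r s hr hs hr0 hrec
      set W := ∑ t ∈ range (T+1), (1 - a/d) ^ (T - t) with hWdef
      have h1W : (1:ℝ) ≤ W := by
        have := Finset.single_le_sum (f := fun t => (1 - a/d) ^ (T - t))
          (fun i _ => by positivity) (Finset.self_mem_range_succ T)
        simpa [hWdef] using this
      have hW0 : (0:ℝ) < W := by linarith
      have hWle : W ≤ d / a := by
        have hre : W = ∑ k ∈ range (T+1), (1 - a/d) ^ k := by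
          rw [hWdef, ← Finset.sum_range_reflect]
          apply Finset.sum_congr rfl
          intro i hi
          rw [Finset.mem_range] at hi
          congr 1
          omega
        rw [hre]
        have := stich_geom_aux (1 - a/d) hq0 hq1 (T+1)
        have he : 1 / (1 - (1 - a/d)) = d / a := by
          rw [show 1 - (1 - a/d) = a/d by ring, one_div_div]
        rw [he] at this
        exact this
      have key : ∀ nn, nn ≤ T+1 →
          b * (1/d) * (∑ t ∈ range nn, (1 - a/d) ^ (T - t) * s t)
            + (1 - a/d) ^ (T + 1 - nn) * r nn
          ≤ (1 - a/d) ^ (T+1) * r 0 + c * (1/d)^2 * ∑ t ∈ range nn, (1 - a/d) ^ (T - t) := by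
        intro nn
        induction nn with
        | zero => intro _; simp
        | succ k ih =>
          intro hk1
          have hkT : k ≤ T := by omega
          have ihk := ih (by omega)
          have hrk : r (k+1) ≤ (1 - a * (1/d)) * r k - b * (1/d) * s k + c * (1/d)^2 :=
            hrec k hkT
          have hpow : (0:ℝ) ≤ (1 - a/d) ^ (T - k) := by positivity
          have hmul := mul_le_mul_of_nonneg_left hrk hpow
          have e1 : T + 1 - (k+1) = T - k := by omega
          have e2 : T + 1 - k = (T - k) + 1 := by omega
          rw [Finset.sum_range_succ, Finset.sum_range_succ, e1]
          rw [e2, pow_succ] at ihk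
          ring_nf at ihk hmul ⊢; linarith
      have hfin := key (T+1) le_rfl
      rw [show T + 1 - (T+1) = 0 by omega, pow_zero, one_mul] at hfin
      set S := ∑ t ∈ range (T+1), (1 - a/d) ^ (T - t) * s t with hSdef
      have hS0 : 0 ≤ S := Finset.sum_nonneg fun i _ => by
        have := hs i; positivity
      have hrT : 0 ≤ r (T+1) := hr _
      have hr00 : 0 ≤ r 0 := hr 0
      -- step 1: (b/W)*S + a*r(T+1) ≤ (d/W)*(b*(1/d)*S + r(T+1))
      have step1 : (b / W) * S + a * r (T+1) ≤ (d / W) * (b * (1/d) * S + r (T+1)) := by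
        have e1 : (d / W) * (b * (1/d) * S) = (b / W) * S := by
          field_simp
        have e2 : a * r (T+1) ≤ (d / W) * r (T+1) := by
          apply mul_le_mul_of_nonneg_right _ hrT
          rw [le_div_iff₀ hW0]
          have h := mul_le_mul_of_nonneg_left hWle ha.le
          have h2 : a * (d/a) = d := by field_simp
          linarith
        rw [mul_add, e1]
        linarith
      have step2 : (d / W) * (b * (1/d) * S + r (T+1))
          ≤ (d / W) * ((1 - a/d) ^ (T+1) * r 0 + c * (1/d)^2 * W) :=
        mul_le_mul_of_nonneg_left hfin (by positivity)
      have step3 : (d / W) * ((1 - a/d) ^ (T+1) * r 0 + c * (1/d)^2 * W)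
          ≤ d * ((1 - a/d) ^ (T+1) * r 0) + c / d := by
        have e1 : (d / W) * (c * (1/d)^2 * W) = c / d := by
          field_simp
        have e2 : (d / W) * ((1 - a/d) ^ (T+1) * r 0) ≤ d * ((1 - a/d) ^ (T+1) * r 0) := by
          apply mul_le_mul_of_nonneg_right _ (by positivity)
          rw [div_le_iff₀ hW0]
          nlinarith [mul_le_mul_of_nonneg_left h1W hd.le]
        rw [mul_add, e1]
        linarith
      have hhalf : (1 - a/d) ^ (T+1) ≤ (1 - a/d) ^ ((T:ℝ)/2) :=
        stich_pow_le_rpow_half _ hq0 (le_of_lt hq1) (T+1) T (by omega)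
          (by push_cast; linarith)
      have hcd : c / d ≤ 36 * c / (a * T) := by
        rw [div_le_div_iff₀ hd (by positivity)]
        nlinarith [mul_le_mul_of_nonneg_left hcase hc, mul_nonneg hc hd.le]
      have h1 : (b / W) * S + a * r (T+1)
          ≤ 32 * d * r₀ * (1 - a/d) ^ ((T:ℝ)/2) + 36 * c / (a * T) := by
        have hrr : r 0 = r₀ := hr0
        have hmono : d * ((1 - a/d) ^ (T+1) * r 0) ≤ 32 * d * r₀ * (1 - a/d) ^ ((T:ℝ)/2) := by
          rw [hrr]
          have hX0 : (0:ℝ) ≤ (1 - a/d) ^ ((T:ℝ)/2) := Real.rpow_nonneg hq0 _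
          nlinarith [mul_le_mul_of_nonneg_left hhalf (by positivity : (0:ℝ) ≤ d * r₀),
            mul_nonneg (mul_nonneg hd.le hr₀) hX0]
        linarith
      exact ⟨h1, hexp _ h1⟩
  · push_neg at hcase
    obtain ⟨γ, w, hγ, hw, hWpos, hmain⟩ :=
      stich_case2 a b c d ha hb hc hd hda T hT r₀ hr₀ hq0 hq1 hT0 hcase
    refine ⟨γ, w, hγ, hw, hWpos, fun r s hr hs hr0 hrec => ?_⟩
    have h1 := hmain r s hr hs hr0 hrec
    exact ⟨h1, hexp _ h1⟩
end

section
/- In the quadratic setting, fix γ_1, …, γ_M > 0, write η_i = γ_i η for a common parameter η > 0, let K_i(η) = (I − γ_i η P_i H_i)^{τ_i}, and assume Q := Σ_{i=1}^M w_i γ_i τ_i P_i H_i is invertible. Then for all sufficiently small η > 0 the matrix Σ_{i=1}^M w_i (I − K_i(η)) is invertible, so x̃(η) = (Σ_{i=1}^M w_i (I − K_i(η)))^{-1} Σ_{i=1}^M w_i (I − K_i(η)) x_i* is well-defined, and lim_{η → 0⁺} x̃(η) = Q^{-1} Σ_{i=1}^M w_i γ_i τ_i P_i H_i x_i*. -/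
open Filter Topology

/-- Apply a real `d × d` matrix as a continuous linear map on Euclidean space. -/
noncomputable def mApp {d : ℕ} (A : Matrix (Fin d) (Fin d) ℝ) :
    EuclideanSpace ℝ (Fin d) →L[ℝ] EuclideanSpace ℝ (Fin d) :=
  Matrix.toEuclideanCLM (𝕜 := ℝ) A

/-- `mApp` as a linear map in the matrix argument. -/
noncomputable def mAppLM (d : ℕ) :
    Matrix (Fin d) (Fin d) ℝ →ₗ[ℝ]
      (EuclideanSpace ℝ (Fin d) →L[ℝ] EuclideanSpace ℝ (Fin d)) where
  toFun A := mApp A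
  map_add' A B := by simp [mApp, map_add]
  map_smul' c A := by simp [mApp, map_smul]

lemma mApp_smul {d : ℕ} (c : ℝ) (A : Matrix (Fin d) (Fin d) ℝ)
    (x : EuclideanSpace ℝ (Fin d)) : mApp (c • A) x = c • mApp A x := by
  simp [mApp, map_smul]

lemma mApp_cont {d : ℕ} :
    Continuous fun A : Matrix (Fin d) (Fin d) ℝ => mApp A :=
  (mAppLM d).continuous_of_finiteDimensional

lemma geom_factor {d : ℕ} (B : Matrix (Fin d) (Fin d) ℝ) (c : ℝ) (n : ℕ) :
    (1 : Matrix (Fin d) (Fin d) ℝ) - ((1 : Matrix (Fin d) (Fin d) ℝ) - c • B) ^ n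
      = (∑ k ∈ Finset.range n, ((1 : Matrix (Fin d) (Fin d) ℝ) - c • B) ^ k) * (c • B) := by
  have h := geom_sum_mul ((1 : Matrix (Fin d) (Fin d) ℝ) - c • B) n
  have h2 : ((1 : Matrix (Fin d) (Fin d) ℝ) - c • B) - 1 = -(c • B) := by abel
  rw [h2, mul_neg] at h
  have h3 := congrArg Neg.neg h
  rw [neg_neg, neg_sub] at h3
  exact h3.symm

lemma smul_nsmul_one_mul {d : ℕ} (B : Matrix (Fin d) (Fin d) ℝ) (n : ℕ) (a b : ℝ) :
    a • ((n • (1 : Matrix (Fin d) (Fin d) ℝ)) * (b • B)) = (a * b * n) • B := by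
  rw [smul_mul_assoc, one_mul, smul_comm, smul_smul, ← Nat.cast_smul_eq_nsmul ℝ, smul_smul]
  ring_nf

lemma pow_cont {d : ℕ} {f : ℝ → Matrix (Fin d) (Fin d) ℝ} (hf : Continuous f) (k : ℕ) :
    Continuous fun η => (f η) ^ k := by
  induction k with
  | zero => simpa using continuous_const
  | succ n ih => simpa [pow_succ] using ih.matrix_mul hf

lemma base_cont {d M : ℕ} (P H : Fin M → Matrix (Fin d) (Fin d) ℝ) (γ : Fin M → ℝ) (i : Fin M) :
    Continuous fun η : ℝ =>
      ((1 : Matrix (Fin d) (Fin d) ℝ) - (γ i * η) • (P i * H i)) :=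
  continuous_const.sub ((continuous_const.mul continuous_id).smul continuous_const)

set_option maxHeartbeats 1600000 in
/-- As the common learning-rate parameter η → 0⁺, the fixed point
x̃(η) of the aggregate operator tends to a non-vanishing biased limit
Q⁻¹ ∑ wᵢ γᵢ τᵢ Pᵢ Hᵢ xᵢ*. -/
theorem quadratic_fixed_point_limit
    (d M : ℕ) (hd : 1 ≤ d) (hM : 1 ≤ M)
    (H P : Fin M → Matrix (Fin d) (Fin d) ℝ)
    (hHsymm : ∀ i, (H i).IsSymm) (hHpd : ∀ i, (H i).PosDef)
    (hPsymm : ∀ i, (P i).IsSymm) (hPpd : ∀ i, (P i).PosDef)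
    (e : Fin M → EuclideanSpace ℝ (Fin d))
    (w : Fin M → ℝ) (hw : ∀ i, 0 < w i) (hw1 : ∑ i, w i = 1)
    (γ : Fin M → ℝ) (hγ : ∀ i, 0 < γ i)
    (τ : Fin M → ℕ) (hτ : ∀ i, 1 ≤ τ i)
    (K : ℝ → Fin M → Matrix (Fin d) (Fin d) ℝ)
    (hK : ∀ η i, K η i
      = ((1 : Matrix (Fin d) (Fin d) ℝ) - (γ i * η) • (P i * H i)) ^ τ i)
    (xs : Fin M → EuclideanSpace ℝ (Fin d))
    (hxs : ∀ i, xs i = mApp (H i)⁻¹ (e i))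
    (Q : Matrix (Fin d) (Fin d) ℝ)
    (hQ : Q = ∑ i, (w i * γ i * τ i) • (P i * H i))
    (hQunit : IsUnit Q)
    (xtilde : ℝ → EuclideanSpace ℝ (Fin d))
    (hxtilde : ∀ η, xtilde η
      = mApp (∑ i, w i • ((1 : Matrix (Fin d) (Fin d) ℝ) - K η i))⁻¹
          (∑ i, w i • mApp ((1 : Matrix (Fin d) (Fin d) ℝ) - K η i) (xs i))) :
    (∃ η₀ > (0 : ℝ), ∀ η, 0 < η → η < η₀ →
        IsUnit (∑ i, w i • ((1 : Matrix (Fin d) (Fin d) ℝ) - K η i)))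
    ∧ Tendsto xtilde (𝓝[>] (0 : ℝ))
        (𝓝 (mApp Q⁻¹ (∑ i, (w i * γ i * τ i) • mApp (P i * H i) (xs i)))) := by
  classical
  set G : ℝ → Matrix (Fin d) (Fin d) ℝ := fun η => ∑ i, w i •
      ((∑ k ∈ Finset.range (τ i),
          ((1 : Matrix (Fin d) (Fin d) ℝ) - (γ i * η) • (P i * H i)) ^ k)
        * (γ i • (P i * H i))) with hGdef
  have hfac : ∀ η i, (1 : Matrix (Fin d) (Fin d) ℝ) - K η i
      = η • ((∑ k ∈ Finset.range (τ i),
          ((1 : Matrix (Fin d) (Fin d) ℝ) - (γ i * η) • (P i * H i)) ^ k)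
        * (γ i • (P i * H i))) := by
    intro η i
    rw [hK, geom_factor]
    rw [Matrix.mul_smul, Matrix.mul_smul, smul_smul, mul_comm (γ i) η]
  have hSfac : ∀ η, (∑ i, w i • ((1 : Matrix (Fin d) (Fin d) ℝ) - K η i)) = η • G η := by
    intro η
    rw [hGdef, Finset.smul_sum]
    refine Finset.sum_congr rfl fun i _ => ?_
    rw [hfac, smul_comm]
  have hG0 : G 0 = Q := by
    rw [hGdef, hQ]
    refine Finset.sum_congr rfl fun i _ => ?_
    simp only [mul_zero, zero_smul, sub_zero, one_pow, Finset.sum_const, Finset.card_range]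
    exact smul_nsmul_one_mul _ _ _ _
  have hGcont : Continuous G := by
    rw [hGdef]
    refine continuous_finset_sum _ fun i _ => Continuous.fun_const_smul ?_ _
    refine Continuous.matrix_mul ?_ continuous_const
    exact continuous_finset_sum _ fun k _ => pow_cont (base_cont P H γ i) k
  have hdetQ : Q.det ≠ 0 :=
    IsUnit.ne_zero ((Matrix.isUnit_iff_isUnit_det Q).mp hQunit)
  have hdetcont : Continuous fun η => (G η).det := hGcont.matrix_det
  have hev : ∀ᶠ η in 𝓝 (0 : ℝ), (G η).det ≠ 0 := by
    have h0 : (G 0).det ≠ 0 := by rw [hG0]; exact hdetQ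
    exact hdetcont.continuousAt.eventually_ne h0
  obtain ⟨η₀, hη₀pos, hη₀⟩ := Metric.eventually_nhds_iff.mp hev
  have hdetG : ∀ η : ℝ, |η| < η₀ → (G η).det ≠ 0 := fun η hη =>
    hη₀ (by simpa [Real.dist_eq] using hη)
  have hSunit : ∀ η : ℝ, η ≠ 0 → |η| < η₀ →
      IsUnit (∑ i, w i • ((1 : Matrix (Fin d) (Fin d) ℝ) - K η i)) := by
    intro η hne hη
    rw [hSfac]
    refine (Matrix.isUnit_iff_isUnit_det _).mpr (isUnit_iff_ne_zero.mpr ?_)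
    rw [Matrix.det_smul]
    exact mul_ne_zero (pow_ne_zero _ hne) (hdetG η hη)
  constructor
  · exact ⟨η₀, hη₀pos, fun η hpos hlt =>
      hSunit η (ne_of_gt hpos) (by rw [abs_of_pos hpos]; exact hlt)⟩
  set u : ℝ → EuclideanSpace ℝ (Fin d) := fun η => ∑ i, w i •
      mApp ((∑ k ∈ Finset.range (τ i),
          ((1 : Matrix (Fin d) (Fin d) ℝ) - (γ i * η) • (P i * H i)) ^ k)
        * (γ i • (P i * H i))) (xs i) with hudef
  have hvfac : ∀ η, (∑ i, w i • mApp ((1 : Matrix (Fin d) (Fin d) ℝ) - K η i) (xs i))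
      = η • u η := by
    intro η
    rw [hudef, Finset.smul_sum]
    refine Finset.sum_congr rfl fun i _ => ?_
    rw [hfac, mApp_smul, smul_comm]
  have hu0 : u 0 = ∑ i, (w i * γ i * τ i) • mApp (P i * H i) (xs i) := by
    rw [hudef]
    refine Finset.sum_congr rfl fun i _ => ?_
    simp only [mul_zero, zero_smul, sub_zero, one_pow, Finset.sum_const, Finset.card_range]
    rw [← mApp_smul, ← mApp_smul]
    exact congrArg (fun A => mApp A (xs i)) (smul_nsmul_one_mul _ _ _ _)
  have hucont : Continuous u := by
    rw [hudef]
    refine continuous_finset_sum _ fun i _ => Continuous.fun_const_smul ?_ _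
    refine Continuous.clm_apply ?_ continuous_const
    refine mApp_cont.comp ?_
    refine Continuous.matrix_mul ?_ continuous_const
    exact continuous_finset_sum _ fun k _ => pow_cont (base_cont P H γ i) k
  -- continuity at 0 of the reduced expression
  have hGinvcont : ContinuousAt (fun η => (G η)⁻¹) 0 := by
    refine ContinuousAt.comp ?_ hGcont.continuousAt
    refine continuousAt_matrix_inv (G 0) ?_
    rw [Ring.inverse_eq_inv']
    exact continuousAt_inv₀ (by rw [hG0]; exact hdetQ)
  have hφcont : ContinuousAt (fun η => mApp (G η)⁻¹ (u η)) 0 := by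
    have h1 : ContinuousAt (fun η => mApp (G η)⁻¹) 0 :=
      ContinuousAt.comp (g := mApp) (f := fun η => (G η)⁻¹) (x := 0)
        mApp_cont.continuousAt hGinvcont
    have hpair : ContinuousAt (fun η => (mApp (G η)⁻¹, u η)) 0 :=
      h1.prodMk hucont.continuousAt
    have heval : Continuous (fun p :
        (EuclideanSpace ℝ (Fin d) →L[ℝ] EuclideanSpace ℝ (Fin d))
          × EuclideanSpace ℝ (Fin d) => p.1 p.2) :=
      isBoundedBilinearMap_apply.continuous
    exact heval.continuousAt.comp hpair
  -- eventual equality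
  have heq : ∀ᶠ η in 𝓝[>] (0 : ℝ), xtilde η = mApp (G η)⁻¹ (u η) := by
    filter_upwards [Ioo_mem_nhdsGT_of_mem (Set.mem_Ico.mpr ⟨le_refl (0:ℝ), hη₀pos⟩)]
      with η hη
    obtain ⟨hpos, hlt⟩ := hη
    have hne : η ≠ 0 := ne_of_gt hpos
    have habs : |η| < η₀ := by rw [abs_of_pos hpos]; exact hlt
    have hGdet := hdetG η habs
    have hinv : (∑ i, w i • ((1 : Matrix (Fin d) (Fin d) ℝ) - K η i))⁻¹
        = η⁻¹ • (G η)⁻¹ := by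
      rw [hSfac]
      refine Matrix.inv_eq_right_inv ?_
      rw [Matrix.smul_mul, Matrix.mul_smul, smul_smul, mul_inv_cancel₀ hne, one_smul]
      exact Matrix.mul_nonsing_inv _ (isUnit_iff_ne_zero.mpr hGdet)
    rw [hxtilde, hinv, hvfac, mApp_smul, map_smul, smul_smul, inv_mul_cancel₀ hne, one_smul]
  -- conclude
  have hlim : Tendsto (fun η => mApp (G η)⁻¹ (u η)) (𝓝[>] (0 : ℝ))
      (𝓝 (mApp Q⁻¹ (∑ i, (w i * γ i * τ i) • mApp (P i * H i) (xs i)))) := by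
    have := hφcont.tendsto.mono_left (nhdsWithin_le_nhds (s := Set.Ioi (0:ℝ)))
    rwa [hG0, hu0] at this
  exact hlim.congr' (heq.mono fun η h => h.symm)
end

section
/- In the quadratic setting, let x* = (Σ_{i=1}^M w_i H_i)^{-1} Σ_{i=1}^M w_i H_i x_i* be the minimizer of the global objective F = Σ_{i=1}^M w_i F_i. If the matrices (I − K_i) H_i^{-1} coincide for all i = 1, …, M, then A(x*) = x*; if moreover the operator norm of Σ_{i=1}^M w_i K_i is strictly less than 1, then the unique fixed point x̃ of A equals x*. -/
/-- The ℓ²-operator (spectral) norm of a real matrix. -/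
noncomputable def opNorm {d : ℕ} (A : Matrix (Fin d) (Fin d) ℝ) : ℝ :=
  ‖mApp A‖

lemma mApp_mul {d : ℕ} (A B : Matrix (Fin d) (Fin d) ℝ) (x : EuclideanSpace ℝ (Fin d)) :
    mApp (A * B) x = mApp A (mApp B x) := by
  simp [mApp, map_mul]

lemma mApp_one {d : ℕ} (x : EuclideanSpace ℝ (Fin d)) : mApp 1 x = x := by
  simp [mApp, map_one]

lemma mApp_sub {d : ℕ} (A B : Matrix (Fin d) (Fin d) ℝ) (x : EuclideanSpace ℝ (Fin d)) :
    mApp (A - B) x = mApp A x - mApp B x := by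
  simp [mApp, map_sub]

lemma mApp_sum_smul {d M : ℕ} (w : Fin M → ℝ) (A : Fin M → Matrix (Fin d) (Fin d) ℝ)
    (x : EuclideanSpace ℝ (Fin d)) :
    mApp (∑ i, w i • A i) x = ∑ i, w i • mApp (A i) x := by
  simp [mApp, map_sum, map_smul]

/-- If the matrices `(I - Kᵢ) Hᵢ⁻¹` coincide across clients, then
the global minimizer x* is a fixed point of the aggregate operator A; if
moreover `‖∑ wᵢ Kᵢ‖_op < 1`, the unique fixed point of A equals x*. -/
theorem quadratic_consistency
    (d M : ℕ) (hd : 1 ≤ d) (hM : 1 ≤ M)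
    (H P : Fin M → Matrix (Fin d) (Fin d) ℝ)
    (hHsymm : ∀ i, (H i).IsSymm) (hHpd : ∀ i, (H i).PosDef)
    (hPsymm : ∀ i, (P i).IsSymm) (hPpd : ∀ i, (P i).PosDef)
    (e : Fin M → EuclideanSpace ℝ (Fin d))
    (w : Fin M → ℝ) (hw : ∀ i, 0 < w i) (hw1 : ∑ i, w i = 1)
    (η : Fin M → ℝ) (hη : ∀ i, 0 < η i)
    (τ : Fin M → ℕ) (hτ : ∀ i, 1 ≤ τ i)
    (K : Fin M → Matrix (Fin d) (Fin d) ℝ)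
    (hK : ∀ i, K i = ((1 : Matrix (Fin d) (Fin d) ℝ) - η i • (P i * H i)) ^ τ i)
    (xs : Fin M → EuclideanSpace ℝ (Fin d))
    (hxs : ∀ i, xs i = mApp (H i)⁻¹ (e i))
    (A : EuclideanSpace ℝ (Fin d) → EuclideanSpace ℝ (Fin d))
    (hA : ∀ x, A x = ∑ i, w i • (mApp (K i) (x - xs i) + xs i))
    (xstar : EuclideanSpace ℝ (Fin d))
    (hxstar : xstar = mApp (∑ i, w i • H i)⁻¹ (∑ i, w i • mApp (H i) (xs i)))
    (hcoincide : ∀ i j,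
      ((1 : Matrix (Fin d) (Fin d) ℝ) - K i) * (H i)⁻¹
        = ((1 : Matrix (Fin d) (Fin d) ℝ) - K j) * (H j)⁻¹) :
    A xstar = xstar
    ∧ (opNorm (∑ i, w i • K i) < 1 → ∀ x, A x = x → x = xstar) := by
  haveI : NeZero M := ⟨by omega⟩
  set i0 : Fin M := 0
  set Q : Matrix (Fin d) (Fin d) ℝ := (1 - K i0) * (H i0)⁻¹ with hQ
  set S : Matrix (Fin d) (Fin d) ℝ := ∑ i, w i • H i with hS
  set b : EuclideanSpace ℝ (Fin d) := ∑ i, w i • mApp (H i) (xs i) with hb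
  -- each `1 - K i = Q * H i`
  have hQH : ∀ i, (1 : Matrix (Fin d) (Fin d) ℝ) - K i = Q * H i := by
    intro i
    have h1 : ((1 : Matrix (Fin d) (Fin d) ℝ) - K i) * (H i)⁻¹ = Q := hcoincide i i0
    have h2 : (H i)⁻¹ * H i = 1 :=
      Matrix.nonsing_inv_mul _ ((Matrix.isUnit_iff_isUnit_det _).1 (hHpd i).isUnit)
    calc (1 : Matrix (Fin d) (Fin d) ℝ) - K i
        = ((1 - K i) * (H i)⁻¹) * H i := by rw [mul_assoc, h2, mul_one]
      _ = Q * H i := by rw [h1]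
  -- S is positive definite, hence invertible
  have hwH : ∀ i, (w i • H i).PosDef := by
    intro i
    constructor
    · simp only [Matrix.IsHermitian, Matrix.conjTranspose_smul, (hHpd i).isHermitian.eq]
      simp
    · intro x hx
      exact ((hHpd i).smul (hw i)).2 hx
  have hSpd : S.PosDef := by
    have hrest : (∑ i ∈ Finset.univ.erase i0, w i • H i).PosSemidef := by
      refine Finset.sum_induction _ _ (fun a b ha hb => ha.add hb)
        Matrix.PosSemidef.zero (fun i _ => (hwH i).posSemidef)
    have hsplit : S = w i0 • H i0 + ∑ i ∈ Finset.univ.erase i0, w i • H i := by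
      rw [hS, ← Finset.add_sum_erase _ _ (Finset.mem_univ i0)]
    rw [hsplit]
    exact (hwH i0).add_posSemidef hrest
  have hSS : S * S⁻¹ = 1 :=
    Matrix.mul_nonsing_inv _ ((Matrix.isUnit_iff_isUnit_det _).1 hSpd.isUnit)
  -- key identity : A x - x = mApp Q (b - mApp S x)
  have key : ∀ x, A x - x = mApp Q (b - mApp S x) := by
    intro x
    have hx1 : x = ∑ i, w i • x := by
      rw [← Finset.sum_smul, hw1, one_smul]
    calc A x - x = ∑ i, w i • (mApp (K i) (x - xs i) + xs i) - ∑ i, w i • x := by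
          rw [hA x, ← hx1]
      _ = ∑ i, w i • (mApp (K i) (x - xs i) + xs i - x) := by
          rw [← Finset.sum_sub_distrib]
          exact Finset.sum_congr rfl fun i _ => by rw [smul_sub]
      _ = ∑ i, w i • (-(mApp Q (mApp (H i) x - mApp (H i) (xs i)))) := by
          refine Finset.sum_congr rfl fun i _ => ?_
          congr 1
          have : mApp (K i) (x - xs i) + xs i - x
              = -(mApp (1 - K i) (x - xs i)) := by
            rw [mApp_sub, mApp_one]
            simp [map_sub]
            abel
          rw [this, hQH i, mApp_mul, map_sub]
      _ = mApp Q (b - mApp S x) := by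
          rw [map_sub, hb, hS, mApp_sum_smul, map_sum, map_sum, ← Finset.sum_sub_distrib]
          refine Finset.sum_congr rfl fun i _ => ?_
          simp only [map_smul, map_sub, smul_sub, smul_neg, neg_sub]
  -- part 1
  have hfix : A xstar = xstar := by
    have : mApp S xstar = b := by
      rw [hxstar, ← mApp_mul, hSS, mApp_one]
    have h0 : A xstar - xstar = 0 := by
      rw [key, this, sub_self, map_zero]
    exact sub_eq_zero.mp h0
  refine ⟨hfix, fun hlt x hxfix => ?_⟩
  set B : Matrix (Fin d) (Fin d) ℝ := ∑ i, w i • K i with hB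
  have hAB : A x - A xstar = mApp B (x - xstar) := by
    rw [hA x, hA xstar, ← Finset.sum_sub_distrib, hB, mApp_sum_smul]
    refine Finset.sum_congr rfl fun i _ => ?_
    rw [← smul_sub]
    congr 1
    have : x - xs i - (xstar - xs i) = x - xstar := by abel
    rw [add_sub_add_right_eq_sub, ← map_sub, this]
  rw [hxfix, hfix] at hAB
  by_contra hne
  have hpos : 0 < ‖x - xstar‖ := by
    rw [norm_pos_iff]
    exact sub_ne_zero.mpr hne
  have hle : ‖mApp B (x - xstar)‖ ≤ ‖mApp B‖ * ‖x - xstar‖ :=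
    (mApp B).le_opNorm _
  rw [← hAB] at hle
  have hlt' : ‖mApp B‖ < 1 := hlt
  nlinarith
end

section
/- Let F : ℝ^d → ℝ be twice continuously differentiable with μ I ≼ ∇²F(z) ≼ L I for all z ∈ ℝ^d, where 0 < μ ≤ L. Let g(·, ξ) be a stochastic gradient oracle with E_ξ[g(x, ξ)] = ∇F(x) and E_ξ‖g(x, ξ) − ∇F(x)‖² ≤ σ² for every fixed x ∈ ℝ^d, let ξ^{(0)}, ξ^{(1)}, … be independent samples, and consider the SGD sequence x^{(k+1)} = x^{(k)} − η g(x^{(k)}, ξ^{(k)}) started from a deterministic x^{(0)} ∈ ℝ^d. If the learning rate satisfies ηL < 2, then for all k ≥ 0, E‖x^{(k)} − E[x^{(k)}]‖² ≤ k η² σ². (That is, vanilla SGD satisfies the bounded cumulative variance assumption with q(k) = η² k.) -/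
open MeasureTheory
open scoped RealInnerProductSpace

section SgdAux

variable {d : ℕ}

/-- Cauchy–Schwarz for a symmetric positive operator. -/
lemma sgd_aux_cs (A : EuclideanSpace ℝ (Fin d) →L[ℝ] EuclideanSpace ℝ (Fin d))
    (hsymm : ∀ u w, ⟪A u, w⟫ = ⟪A w, u⟫) (hpos : ∀ v, 0 ≤ ⟪A v, v⟫)
    (u w : EuclideanSpace ℝ (Fin d)) :
    ⟪A u, w⟫ ^ 2 ≤ ⟪A u, u⟫ * ⟪A w, w⟫ := by
  have h : ∀ t : ℝ, 0 ≤ ⟪A w, w⟫ * (t * t) + (2 * ⟪A u, w⟫) * t + ⟪A u, u⟫ := by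
    intro t
    have h0 := hpos (u + t • w)
    have hexp : ⟪A (u + t • w), u + t • w⟫
        = ⟪A u, u⟫ + t * ⟪A u, w⟫ + t * ⟪A w, u⟫ + t * t * ⟪A w, w⟫ := by
      simp only [map_add, A.map_smul, inner_add_left, inner_add_right,
        real_inner_smul_left, real_inner_smul_right]
      ring
    rw [hexp, hsymm w u] at h0
    linarith
  have hd := discrim_le_zero h
  rw [discrim] at hd
  nlinarith [hd]

/-- Cocoercivity from the quadratic form bounds. -/
lemma sgd_aux_coco (A : EuclideanSpace ℝ (Fin d) →L[ℝ] EuclideanSpace ℝ (Fin d)) (L : ℝ)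
    (hL : 0 ≤ L) (hsymm : ∀ u w, ⟪A u, w⟫ = ⟪A w, u⟫) (hpos : ∀ v, 0 ≤ ⟪A v, v⟫)
    (hub : ∀ v, ⟪A v, v⟫ ≤ L * ‖v‖ ^ 2) (v : EuclideanSpace ℝ (Fin d)) :
    ‖A v‖ ^ 2 ≤ L * ⟪A v, v⟫ := by
  have cs := sgd_aux_cs A hsymm hpos v (A v)
  have h1 : ⟪A v, A v⟫ = ‖A v‖ ^ 2 := real_inner_self_eq_norm_sq (A v)
  have h2 := hub (A v)
  have h3 := hpos v
  have h4 := hpos (A v)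
  rw [h1] at cs
  rcases eq_or_lt_of_le (sq_nonneg ‖A v‖) with hz | hz
  · rw [← hz]
    positivity
  · nlinarith [cs, h2, h3, hz]

/-- Nonexpansiveness of `v ↦ v - η • A v`. -/
lemma sgd_aux_nonexp (A : EuclideanSpace ℝ (Fin d) →L[ℝ] EuclideanSpace ℝ (Fin d)) (η L : ℝ)
    (hη : 0 < η) (hηL : η * L < 2) (hL : 0 ≤ L)
    (hsymm : ∀ u w, ⟪A u, w⟫ = ⟪A w, u⟫) (hpos : ∀ v, 0 ≤ ⟪A v, v⟫)
    (hub : ∀ v, ⟪A v, v⟫ ≤ L * ‖v‖ ^ 2) (v : EuclideanSpace ℝ (Fin d)) :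
    ‖v - η • A v‖ ≤ ‖v‖ := by
  have hco := sgd_aux_coco A L hL hsymm hpos hub v
  have hAv : 0 ≤ ⟪A v, v⟫ := hpos v
  have hsq : ‖v - η • A v‖ ^ 2 ≤ ‖v‖ ^ 2 := by
    rw [norm_sub_sq_real]
    have hi : ⟪v, η • A v⟫ = η * ⟪A v, v⟫ := by
      rw [real_inner_smul_right, real_inner_comm]
    have hns : ‖η • A v‖ ^ 2 = η ^ 2 * ‖A v‖ ^ 2 := by
      rw [norm_smul, mul_pow, Real.norm_eq_abs, sq_abs]
    rw [hi, hns]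
    nlinarith [mul_le_mul_of_nonneg_left hco (sq_nonneg η),
      mul_nonneg (mul_nonneg hη.le hAv) (by linarith : (0:ℝ) ≤ 2 - η * L)]
  nlinarith [norm_nonneg (v - η • A v), norm_nonneg v, hsq]

/-- Symmetry of the Hessian (as derivative of the gradient). -/
lemma sgd_aux_symm (F : EuclideanSpace ℝ (Fin d) → ℝ) (hF : ContDiff ℝ 2 F)
    (z u w : EuclideanSpace ℝ (Fin d)) :
    ⟪fderiv ℝ (gradient F) z u, w⟫ = ⟪fderiv ℝ (gradient F) z w, u⟫ := by
  have hFd : Differentiable ℝ F := hF.differentiable (by norm_num)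
  have hf'c : ContDiff ℝ 1 (fderiv ℝ F) := hF.fderiv_right (by norm_num)
  have hgc : ContDiff ℝ 1 (gradient F) :=
    (LinearIsometryEquiv.contDiff _).comp hf'c
  have hgdiff : Differentiable ℝ (gradient F) := hgc.differentiable one_ne_zero
  have main : ∀ v₁ v₂ : EuclideanSpace ℝ (Fin d),
      ⟪v₂, fderiv ℝ (gradient F) z v₁⟫ = fderiv ℝ (fderiv ℝ F) z v₁ v₂ := by
    intro v₁ v₂
    have hfun : (fun x => ⟪v₂, gradient F x⟫) = fun x => fderiv ℝ F x v₂ := by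
      funext x
      rw [real_inner_comm]
      exact InnerProductSpace.toDual_symm_apply
    have h1 : HasFDerivAt (fun x => ⟪v₂, gradient F x⟫)
        ((innerSL ℝ v₂).comp (fderiv ℝ (gradient F) z)) z :=
      (innerSL ℝ v₂).hasFDerivAt.comp z (hgdiff z).hasFDerivAt
    have h2 : HasFDerivAt (fun x => fderiv ℝ F x v₂)
        ((ContinuousLinearMap.apply ℝ ℝ v₂).comp (fderiv ℝ (fderiv ℝ F) z)) z :=
      (ContinuousLinearMap.apply ℝ ℝ v₂).hasFDerivAt.comp z
        ((hf'c.differentiable one_ne_zero) z).hasFDerivAt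
    rw [hfun] at h1
    have heq := h1.unique h2
    have := congrFun (congrArg (fun (L : _ →L[ℝ] ℝ) => (L : _ → ℝ)) heq) v₁
    simpa using this
  have hsecond := second_derivative_symmetric (fun y => (hFd y).hasFDerivAt)
    ((hf'c.differentiable one_ne_zero z).hasFDerivAt) u w
  rw [real_inner_comm, main u w, real_inner_comm, main w u]
  exact hsecond

/-- The mean minimizes the expected squared distance. -/
lemma sgd_aux_varmin {d : ℕ} {α : Type*} [MeasurableSpace α] (P : Measure α)
    [IsProbabilityMeasure P] (Y : α → EuclideanSpace ℝ (Fin d)) (hY : MemLp Y 2 P)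
    (c : EuclideanSpace ℝ (Fin d)) :
    ∫ ω, ‖Y ω - ∫ ω', Y ω' ∂P‖ ^ 2 ∂P ≤ ∫ ω, ‖Y ω - c‖ ^ 2 ∂P := by
  set m := ∫ ω', Y ω' ∂P with hm
  have hYint : Integrable Y P := hY.integrable (by norm_num)
  have hYm : MemLp (fun ω => Y ω - m) 2 P := hY.sub (memLp_const m)
  have h1 : Integrable (fun ω => ‖Y ω - m‖ ^ 2) P :=
    (memLp_two_iff_integrable_sq_norm hYm.aestronglyMeasurable).mp hYm
  have h3 : Integrable (fun ω => ⟪m - c, Y ω - m⟫) P :=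
    (hYint.sub (integrable_const m)).const_inner (m - c)
  have hzero : (∫ ω, (Y ω - m) ∂P) = 0 := by
    rw [integral_sub hYint (integrable_const m), integral_const]
    simp [hm]
  have hexp : ∀ ω, ‖Y ω - c‖ ^ 2
      = ‖Y ω - m‖ ^ 2 + (2 * ⟪m - c, Y ω - m⟫ + ‖m - c‖ ^ 2) := by
    intro ω
    have h : Y ω - c = (Y ω - m) + (m - c) := by abel
    rw [h, norm_add_sq_real, real_inner_comm]
    ring
  calc ∫ ω, ‖Y ω - m‖ ^ 2 ∂P
      ≤ ∫ ω, ‖Y ω - m‖ ^ 2 ∂P + (2 * ⟪m - c, (0 : EuclideanSpace ℝ (Fin d))⟫ + ‖m - c‖ ^ 2) := by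
        simp [sq_nonneg]
    _ = ∫ ω, ‖Y ω - m‖ ^ 2 ∂P + (2 * ⟪m - c, ∫ ω, (Y ω - m) ∂P⟫ + ‖m - c‖ ^ 2) := by
        rw [hzero]
    _ = ∫ ω, ‖Y ω - c‖ ^ 2 ∂P := by
        have hinner := integral_inner (𝕜 := ℝ) (f := fun ω => Y ω - m)
          (hYint.sub (integrable_const m)) (m - c)
        have hpt : (fun ω => ‖Y ω - c‖ ^ 2)
            = fun ω => ‖Y ω - m‖ ^ 2 + (2 * ⟪m - c, Y ω - m⟫ + ‖m - c‖ ^ 2) := funext hexp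
        have h4 : Integrable (fun ω => 2 * ⟪m - c, Y ω - m⟫) P := h3.const_mul 2
        have h5 : Integrable (fun ω => 2 * ⟪m - c, Y ω - m⟫ + ‖m - c‖ ^ 2) P := by
          exact h4.add (integrable_const _)
        rw [hpt, integral_add h1 h5, integral_add h4 (integrable_const _),
          MeasureTheory.integral_const_mul, hinner, integral_const, hzero]
        simp

/-- The measurable representation of the SGD iterates. -/
noncomputable def sgdPhi {d : ℕ} {S : Type*}
    (g : EuclideanSpace ℝ (Fin d) → S → EuclideanSpace ℝ (Fin d)) (η : ℝ)
    (x0 : EuclideanSpace ℝ (Fin d)) : (n : ℕ) → (Fin n → S) → EuclideanSpace ℝ (Fin d)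
  | 0, _ => x0
  | (n+1), v => sgdPhi g η x0 n (Fin.init v)
      - η • g (sgdPhi g η x0 n (Fin.init v)) (v (Fin.last n))

end SgdAux
/-- SGD satisfies the bounded cumulative variance assumption with
`q(k) = η² k`: the variance of the k-th iterate is at most `k η² σ²`. -/
theorem sgd_bounded_cumulative_variance
    (d : ℕ) (F : EuclideanSpace ℝ (Fin d) → ℝ) (μ L σ : ℝ)
    (hμ : 0 < μ) (hμL : μ ≤ L) (hσ : 0 ≤ σ)
    (hF : ContDiff ℝ 2 F)
    (hHessLower : ∀ z v : EuclideanSpace ℝ (Fin d),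
      μ * ‖v‖ ^ 2 ≤ ⟪fderiv ℝ (gradient F) z v, v⟫)
    (hHessUpper : ∀ z v : EuclideanSpace ℝ (Fin d),
      ⟪fderiv ℝ (gradient F) z v, v⟫ ≤ L * ‖v‖ ^ 2)
    {S : Type*} [MeasurableSpace S] (ν : Measure S) [IsProbabilityMeasure ν]
    (g : EuclideanSpace ℝ (Fin d) → S → EuclideanSpace ℝ (Fin d))
    (hgmeas : Measurable (Function.uncurry g))
    (hgint : ∀ x, Integrable (g x) ν)
    (hgsq : ∀ x, Integrable (fun s => ‖g x s - gradient F x‖ ^ 2) ν)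
    (hunbiased : ∀ x, ∫ s, g x s ∂ν = gradient F x)
    (hvar : ∀ x, ∫ s, ‖g x s - gradient F x‖ ^ 2 ∂ν ≤ σ ^ 2)
    {Ω : Type*} [MeasurableSpace Ω] (P : Measure Ω) [IsProbabilityMeasure P]
    (ξ : ℕ → Ω → S) (hξmeas : ∀ n, Measurable (ξ n))
    (hξindep : ProbabilityTheory.iIndepFun ξ P)
    (hξlaw : ∀ n, Measure.map (ξ n) P = ν)
    (η : ℝ) (hη : 0 < η) (hηlt : η * L < 2)
    (x0 : EuclideanSpace ℝ (Fin d))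
    (X : ℕ → Ω → EuclideanSpace ℝ (Fin d))
    (hX0 : ∀ ω, X 0 ω = x0)
    (hXrec : ∀ k ω, X (k + 1) ω = X k ω - η • g (X k ω) (ξ k ω)) :
    ∀ k : ℕ, ∫ ω, ‖X k ω - ∫ ω', X k ω' ∂P‖ ^ 2 ∂P ≤ k * η ^ 2 * σ ^ 2 := by
  classical
  have hL0 : 0 ≤ L := le_trans hμ.le hμL
  set T : EuclideanSpace ℝ (Fin d) → EuclideanSpace ℝ (Fin d) :=
    fun x => x - η • gradient F x with hTdef
  -- gradient smoothness
  have hf'c : ContDiff ℝ 1 (fderiv ℝ F) := hF.fderiv_right (by norm_num)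
  have hgc : ContDiff ℝ 1 (gradient F) := (LinearIsometryEquiv.contDiff _).comp hf'c
  have hgdiff : Differentiable ℝ (gradient F) := hgc.differentiable one_ne_zero
  -- T is 1-Lipschitz
  have hsymm : ∀ z u w, ⟪fderiv ℝ (gradient F) z u, w⟫ = ⟪fderiv ℝ (gradient F) z w, u⟫ :=
    fun z => sgd_aux_symm F hF z
  have hpos : ∀ z v, 0 ≤ ⟪fderiv ℝ (gradient F) z v, v⟫ := fun z v =>
    le_trans (by positivity) (hHessLower z v)
  have hTdiff : ∀ x, DifferentiableAt ℝ T x := fun x =>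
    differentiableAt_fun_id.sub ((hgdiff x).const_smul η)
  have hTfd : ∀ z, fderiv ℝ T z
      = ContinuousLinearMap.id ℝ _ - η • fderiv ℝ (gradient F) z := by
    intro z
    rw [hTdef]
    rw [fderiv_fun_sub differentiableAt_fun_id ((hgdiff z).fun_const_smul η), fderiv_id',
      fderiv_fun_const_smul (hgdiff z)]
  have hTnorm : ∀ z, ‖fderiv ℝ T z‖ ≤ 1 := by
    intro z
    refine ContinuousLinearMap.opNorm_le_bound _ zero_le_one fun v => ?_
    rw [hTfd z, one_mul]
    have happ : (ContinuousLinearMap.id ℝ (EuclideanSpace ℝ (Fin d))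
        - η • fderiv ℝ (gradient F) z) v = v - η • fderiv ℝ (gradient F) z v := by
      simp
    rw [happ]
    exact sgd_aux_nonexp (fderiv ℝ (gradient F) z) η L hη hηlt hL0
      (hsymm z) (hpos z) (fun v => hHessUpper z v) v
  have hTlip : ∀ x y, ‖T x - T y‖ ≤ ‖x - y‖ := by
    intro x y
    have h := Convex.norm_image_sub_le_of_norm_fderiv_le (s := Set.univ) (f := T)
      (fun z _ => hTdiff z) (fun z _ => hTnorm z) convex_univ (Set.mem_univ y) (Set.mem_univ x)
    simpa using h
  -- measurability
  have hgradmeas : Measurable (gradient F) := hgc.continuous.measurable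
  have hTmeas : Measurable T := measurable_id.sub (hgradmeas.const_smul η)
  have hXmeas : ∀ k, Measurable (X k) := by
    intro k
    induction k with
    | zero =>
      have h : X 0 = fun _ => x0 := funext hX0
      rw [h]; exact measurable_const
    | succ k ih =>
      have h : X (k+1) = fun ω => X k ω - η • Function.uncurry g (X k ω, ξ k ω) :=
        funext fun ω => hXrec k ω
      rw [h]
      exact ih.sub ((hgmeas.comp (ih.prodMk (hξmeas k))).const_smul η)
  -- measurable representation
  have hΦmeas : ∀ n, Measurable (sgdPhi g η x0 n) := by
    intro n
    induction n with
    | zero => exact measurable_const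
    | succ n ih =>
      have hinit : Measurable (fun v : Fin (n+1) → S => Fin.init v) :=
        measurable_pi_lambda _ fun i => measurable_pi_apply _
      have h1 : Measurable (fun v : Fin (n+1) → S => sgdPhi g η x0 n (Fin.init v)) :=
        ih.comp hinit
      show Measurable (fun v : Fin (n+1) → S => sgdPhi g η x0 n (Fin.init v)
        - η • g (sgdPhi g η x0 n (Fin.init v)) (v (Fin.last n)))
      exact h1.sub ((hgmeas.comp (h1.prodMk (measurable_pi_apply (Fin.last n)))).const_smul η)
  have hXrep : ∀ n ω, X n ω = sgdPhi g η x0 n (fun i => ξ i ω) := by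
    intro n
    induction n with
    | zero => intro ω; exact hX0 ω
    | succ n ih =>
      intro ω
      have hinit : (Fin.init fun i : Fin (n+1) => ξ i ω) = fun i : Fin n => ξ i ω := by
        funext i
        simp [Fin.init]
      show X (n+1) ω = sgdPhi g η x0 n (Fin.init fun i : Fin (n+1) => ξ i ω)
        - η • g (sgdPhi g η x0 n (Fin.init fun i : Fin (n+1) => ξ i ω))
            ((fun i : Fin (n+1) => ξ i ω) (Fin.last n))
      rw [hinit, ← ih ω, hXrec n ω]
      simp [Fin.val_last]
  -- independence of the k-th iterate from the k-th sample
  have hindep : ∀ n, ProbabilityTheory.IndepFun (X n) (ξ n) P := by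
    intro n
    have hdisj : Disjoint (Finset.range n) ({n} : Finset ℕ) := by
      simp only [Finset.disjoint_left, Finset.mem_range, Finset.mem_singleton]
      omega
    have h1 := hξindep.indepFun_finset (Finset.range n) {n} hdisj hξmeas
    have hψmeas : Measurable (fun v : ((i : (Finset.range n : Finset ℕ)) → S) =>
        sgdPhi g η x0 n (fun j : Fin n => v ⟨j, Finset.mem_range.mpr j.isLt⟩)) :=
      (hΦmeas n).comp (measurable_pi_lambda _ fun j => measurable_pi_apply _)
    have hev : Measurable (fun v : ((i : ({n} : Finset ℕ)) → S) =>
        v ⟨n, Finset.mem_singleton_self n⟩) := measurable_pi_apply _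
    have h2 := h1.comp hψmeas hev
    have hXeq : X n = (fun v : ((i : (Finset.range n : Finset ℕ)) → S) =>
        sgdPhi g η x0 n (fun j : Fin n => v ⟨j, Finset.mem_range.mpr j.isLt⟩))
          ∘ (fun ω (i : (Finset.range n : Finset ℕ)) => ξ i ω) := by
      funext ω
      rw [hXrep n ω]
      rfl
    have hξeq : ξ n = (fun v : ((i : ({n} : Finset ℕ)) → S) =>
        v ⟨n, Finset.mem_singleton_self n⟩)
          ∘ (fun ω (i : ({n} : Finset ℕ)) => ξ i ω) := rfl
    rw [hXeq, hξeq]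
    exact h2
  have hpair : ∀ n, Measure.map (fun ω => (X n ω, ξ n ω)) P
      = (Measure.map (X n) P).prod ν := by
    intro n
    rw [← hξlaw n]
    exact (ProbabilityTheory.indepFun_iff_map_prod_eq_prod_map_map
      (hXmeas n).aemeasurable (hξmeas n).aemeasurable).mp (hindep n)
  -- main induction
  have key : ∀ k : ℕ, MemLp (X k) 2 P ∧
      ∫ ω, ‖X k ω - ∫ ω', X k ω' ∂P‖ ^ 2 ∂P ≤ k * η ^ 2 * σ ^ 2 := by
    intro k
    induction k with
    | zero =>
      have h : X 0 = fun _ => x0 := funext hX0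
      constructor
      · rw [h]; exact memLp_const x0
      · rw [h]
        simp
    | succ k ih =>
      obtain ⟨hk2, hkv⟩ := ih
      set μk := Measure.map (X k) P with hμk
      have hμkprob : IsProbabilityMeasure μk := Measure.isProbabilityMeasure_map
        (hXmeas k).aemeasurable
      set b := ∫ ω, T (X k ω) ∂P with hb
      -- T ∘ X k ∈ L²
      have hTX2 : MemLp (fun ω => T (X k ω)) 2 P := by
        refine MemLp.of_le (hk2.norm.add (memLp_const ‖T 0‖))
          ((hTmeas.comp (hXmeas k)).aestronglyMeasurable) (ae_of_all _ fun ω => ?_)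
        have h1 : ‖T (X k ω)‖ ≤ ‖X k ω‖ + ‖T 0‖ := by
          have h2 := hTlip (X k ω) 0
          rw [sub_zero] at h2
          calc ‖T (X k ω)‖ = ‖(T (X k ω) - T 0) + T 0‖ := by rw [sub_add_cancel]
            _ ≤ ‖T (X k ω) - T 0‖ + ‖T 0‖ := norm_add_le _ _
            _ ≤ ‖X k ω‖ + ‖T 0‖ := add_le_add_left h2 _
        calc ‖T (X k ω)‖ ≤ ‖X k ω‖ + ‖T 0‖ := h1
          _ ≤ ‖‖X k ω‖ + ‖T 0‖‖ := le_abs_self _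
      have hTXb2 : MemLp (fun ω => T (X k ω) - b) 2 P := hTX2.sub (memLp_const b)
      have hTXbsq : Integrable (fun ω => ‖T (X k ω) - b‖ ^ 2) P :=
        (memLp_two_iff_integrable_sq_norm hTXb2.aestronglyMeasurable).mp hTXb2
      have hTbmeas : Measurable (fun x : EuclideanSpace ℝ (Fin d) => ‖T x - b‖ ^ 2) :=
        ((hTmeas.sub measurable_const).norm).pow_const 2
      have hTbint : Integrable (fun x => ‖T x - b‖ ^ 2) μk := by
        rw [hμk, integrable_map_measure hTbmeas.aestronglyMeasurable (hXmeas k).aemeasurable]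
        exact hTXbsq
      have hTb_int_eq : ∫ x, ‖T x - b‖ ^ 2 ∂μk = ∫ ω, ‖T (X k ω) - b‖ ^ 2 ∂P := by
        rw [hμk, integral_map (hXmeas k).aemeasurable hTbmeas.aestronglyMeasurable]
      -- decomposition of the (k+1)-st iterate
      set W : Ω → EuclideanSpace ℝ (Fin d) := fun ω => X (k+1) ω - b with hW
      have hWeq : ∀ ω, W ω = (T (X k ω) - b)
          - η • (g (X k ω) (ξ k ω) - gradient F (X k ω)) := by
        intro ω
        show X (k+1) ω - b = _
        rw [hXrec k ω, hTdef, smul_sub]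
        module
      set φf : (EuclideanSpace ℝ (Fin d)) × S → ℝ :=
        fun p => ‖(T p.1 - b) - η • (g p.1 p.2 - gradient F p.1)‖ ^ 2 with hφf
      have hgm2 : Measurable (fun p : (EuclideanSpace ℝ (Fin d)) × S =>
          g p.1 p.2 - gradient F p.1) := hgmeas.sub (hgradmeas.comp measurable_fst)
      have hφmeas : Measurable φf :=
        ((((hTmeas.comp measurable_fst).sub measurable_const).sub
          (hgm2.const_smul η)).norm).pow_const 2
      have hWmeas : Measurable W := (hXmeas (k+1)).sub measurable_const
      have hWcomp : ∀ ω, ‖W ω‖ ^ 2 = φf (X k ω, ξ k ω) := fun ω => by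
        rw [hWeq ω]
      -- inner (per-x) bound
      have hinner : ∀ x, ∫⁻ s, ENNReal.ofReal (φf (x, s)) ∂ν
          ≤ ENNReal.ofReal (‖T x - b‖ ^ 2 + η ^ 2 * σ ^ 2) := by
        intro x
        have hexp : ∀ s, φf (x, s) = ‖T x - b‖ ^ 2
            + ((-(2 * η)) * ⟪T x - b, g x s - gradient F x⟫
              + η ^ 2 * ‖g x s - gradient F x‖ ^ 2) := by
          intro s
          show ‖(T x - b) - η • (g x s - gradient F x)‖ ^ 2 = _
          rw [norm_sub_sq_real, real_inner_smul_right, norm_smul, mul_pow,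
            Real.norm_eq_abs, sq_abs]
          ring
        have hfexp : (fun s => φf (x, s)) = fun s => ‖T x - b‖ ^ 2
            + ((-(2 * η)) * ⟪T x - b, g x s - gradient F x⟫
              + η ^ 2 * ‖g x s - gradient F x‖ ^ 2) := funext hexp
        have hint1 : Integrable (fun s => ⟪T x - b, g x s - gradient F x⟫) ν :=
          ((hgint x).sub (integrable_const _)).const_inner (T x - b)
        have hint2 : Integrable (fun s => (-(2 * η)) * ⟪T x - b, g x s - gradient F x⟫) ν :=
          hint1.const_mul _
        have hint3 : Integrable (fun s => η ^ 2 * ‖g x s - gradient F x‖ ^ 2) ν :=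
          (hgsq x).const_mul _
        have hint23 : Integrable (fun s => (-(2 * η)) * ⟪T x - b, g x s - gradient F x⟫
            + η ^ 2 * ‖g x s - gradient F x‖ ^ 2) ν := by
          exact hint2.add hint3
        have hintφ : Integrable (fun s => φf (x, s)) ν := by
          rw [hfexp]
          exact (integrable_const _).add hint23
        have hmean : ∫ s, (g x s - gradient F x) ∂ν = 0 := by
          rw [integral_sub (hgint x) (integrable_const _), hunbiased x, integral_const]
          simp
        have hinner0 : ∫ s, ⟪T x - b, g x s - gradient F x⟫ ∂ν = 0 := by
          rw [integral_inner (𝕜 := ℝ) (f := fun s => g x s - gradient F x)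
            ((hgint x).sub (integrable_const _)) (T x - b), hmean, inner_zero_right]
        have hcalc : ∫ s, φf (x, s) ∂ν ≤ ‖T x - b‖ ^ 2 + η ^ 2 * σ ^ 2 := by
          rw [hfexp, integral_add (integrable_const _) hint23,
            integral_add hint2 hint3, MeasureTheory.integral_const_mul,
            MeasureTheory.integral_const_mul, hinner0, integral_const]
          have hv := hvar x
          have := mul_le_mul_of_nonneg_left hv (sq_nonneg η)
          simp only [probReal_univ, one_smul]
          linarith
        calc ∫⁻ s, ENNReal.ofReal (φf (x, s)) ∂ν
            = ENNReal.ofReal (∫ s, φf (x, s) ∂ν) :=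
              (ofReal_integral_eq_lintegral_ofReal hintφ
                (ae_of_all _ fun s => pow_nonneg (norm_nonneg _) 2)).symm
          _ ≤ _ := ENNReal.ofReal_le_ofReal hcalc
      -- global lintegral bound
      have hlkey : ∫⁻ ω, ENNReal.ofReal (‖W ω‖ ^ 2) ∂P
          ≤ ENNReal.ofReal (∫ x, ‖T x - b‖ ^ 2 ∂μk + η ^ 2 * σ ^ 2) := by
        have hmap := lintegral_map (μ := P) (f := fun p => ENNReal.ofReal (φf p))
          (g := fun ω => (X k ω, ξ k ω))
          (ENNReal.measurable_ofReal.comp hφmeas) ((hXmeas k).prodMk (hξmeas k))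
        rw [hpair k, ← hμk] at hmap
        have hstep0 : ∫⁻ ω, ENNReal.ofReal (‖W ω‖ ^ 2) ∂P
            = ∫⁻ ω, ENNReal.ofReal (φf (X k ω, ξ k ω)) ∂P := by
          congr 1
          funext ω
          rw [hWcomp ω]
        have hstep1 : ∫⁻ ω, ENNReal.ofReal (‖W ω‖ ^ 2) ∂P
            = ∫⁻ p, ENNReal.ofReal (φf p) ∂(μk.prod ν) := hstep0.trans hmap.symm
        have hofmeas : Measurable (fun p => ENNReal.ofReal (φf p)) := by
          exact ENNReal.measurable_ofReal.comp hφmeas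
        have hprod := lintegral_prod (μ := μk) (ν := ν)
          (fun p => ENNReal.ofReal (φf p)) hofmeas.aemeasurable
        rw [hstep1, hprod]
        calc ∫⁻ x, ∫⁻ s, ENNReal.ofReal (φf (x, s)) ∂ν ∂μk
            ≤ ∫⁻ x, ENNReal.ofReal (‖T x - b‖ ^ 2 + η ^ 2 * σ ^ 2) ∂μk :=
              lintegral_mono hinner
          _ = ENNReal.ofReal (∫ x, (‖T x - b‖ ^ 2 + η ^ 2 * σ ^ 2) ∂μk) :=
              (ofReal_integral_eq_lintegral_ofReal (hTbint.add (integrable_const _))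
                (ae_of_all _ fun x => add_nonneg (pow_nonneg (norm_nonneg _) 2) (by positivity))).symm
          _ = ENNReal.ofReal (∫ x, ‖T x - b‖ ^ 2 ∂μk + η ^ 2 * σ ^ 2) := by
              rw [integral_add hTbint (integrable_const _), integral_const]
              simp
      -- integrability of ‖W‖²  and MemLp of X (k+1)
      have hWsqint : Integrable (fun ω => ‖W ω‖ ^ 2) P := by
        refine ⟨(hWmeas.norm.pow_const 2).aestronglyMeasurable, ?_⟩
        rw [hasFiniteIntegral_iff_ofReal (ae_of_all _ fun ω => pow_nonneg (norm_nonneg _) 2)]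
        exact lt_of_le_of_lt hlkey ENNReal.ofReal_lt_top
      have hW2 : MemLp W 2 P :=
        (memLp_two_iff_integrable_sq_norm hWmeas.aestronglyMeasurable).mpr hWsqint
      have hk12 : MemLp (X (k+1)) 2 P := by
        have h : X (k+1) = fun ω => W ω + b := by
          funext ω
          show X (k+1) ω = X (k+1) ω - b + b
          rw [sub_add_cancel]
        rw [h]
        exact hW2.add (memLp_const b)
      -- quantitative bound on ∫ ‖W‖²
      have hWbound : ∫ ω, ‖W ω‖ ^ 2 ∂P ≤ ∫ ω, ‖T (X k ω) - b‖ ^ 2 ∂P + η ^ 2 * σ ^ 2 := by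
        have h1 : ∫ ω, ‖W ω‖ ^ 2 ∂P = (∫⁻ ω, ENNReal.ofReal (‖W ω‖ ^ 2) ∂P).toReal :=
          integral_eq_lintegral_of_nonneg_ae (ae_of_all _ fun ω => pow_nonneg (norm_nonneg _) 2)
            (hWmeas.norm.pow_const 2).aestronglyMeasurable
        have hnn : 0 ≤ ∫ x, ‖T x - b‖ ^ 2 ∂μk + η ^ 2 * σ ^ 2 :=
          add_nonneg (integral_nonneg fun x => pow_nonneg (norm_nonneg _) 2) (by positivity)
        have h2 := ENNReal.toReal_mono ENNReal.ofReal_ne_top hlkey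
        rw [ENNReal.toReal_ofReal hnn] at h2
        rw [h1, ← hTb_int_eq]
        exact h2
      -- contraction step
      set mk := ∫ ω, X k ω ∂P with hmk
      have hXkm2q : MemLp (fun ω => X k ω - mk) 2 P := hk2.sub (memLp_const mk)
      have hXkm2 : Integrable (fun ω => ‖X k ω - mk‖ ^ 2) P :=
        (memLp_two_iff_integrable_sq_norm hXkm2q.aestronglyMeasurable).mp hXkm2q
      have hTXm2q : MemLp (fun ω => T (X k ω) - T mk) 2 P := hTX2.sub (memLp_const (T mk))
      have hTXm2 : Integrable (fun ω => ‖T (X k ω) - T mk‖ ^ 2) P :=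
        (memLp_two_iff_integrable_sq_norm hTXm2q.aestronglyMeasurable).mp hTXm2q
      have hcontr : ∫ ω, ‖T (X k ω) - b‖ ^ 2 ∂P ≤ ∫ ω, ‖X k ω - mk‖ ^ 2 ∂P := by
        have hvm := sgd_aux_varmin P (fun ω => T (X k ω)) hTX2 (T mk)
        rw [← hb] at hvm
        calc ∫ ω, ‖T (X k ω) - b‖ ^ 2 ∂P ≤ ∫ ω, ‖T (X k ω) - T mk‖ ^ 2 ∂P := hvm
          _ ≤ ∫ ω, ‖X k ω - mk‖ ^ 2 ∂P := by
              refine integral_mono hTXm2 hXkm2 fun ω => ?_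
              exact pow_le_pow_left₀ (norm_nonneg _) (hTlip (X k ω) mk) 2
      -- final chain
      refine ⟨hk12, ?_⟩
      have hvm1 := sgd_aux_varmin P (X (k+1)) hk12 b
      have hWint_eq : ∫ ω, ‖X (k+1) ω - b‖ ^ 2 ∂P = ∫ ω, ‖W ω‖ ^ 2 ∂P := rfl
      calc ∫ ω, ‖X (k+1) ω - ∫ ω', X (k+1) ω' ∂P‖ ^ 2 ∂P
          ≤ ∫ ω, ‖X (k+1) ω - b‖ ^ 2 ∂P := hvm1
        _ = ∫ ω, ‖W ω‖ ^ 2 ∂P := hWint_eq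
        _ ≤ ∫ ω, ‖T (X k ω) - b‖ ^ 2 ∂P + η ^ 2 * σ ^ 2 := hWbound
        _ ≤ ∫ ω, ‖X k ω - mk‖ ^ 2 ∂P + η ^ 2 * σ ^ 2 := by linarith
        _ ≤ k * η ^ 2 * σ ^ 2 + η ^ 2 * σ ^ 2 := by
            rw [hmk]
            linarith [hkv]
        _ = (k + 1 : ℕ) * η ^ 2 * σ ^ 2 := by push_cast; ring
  exact fun k => (key k).2
end

section
/- Let F_1, …, F_M : ℝ^d → ℝ each be twice continuously differentiable with μ I ≼ ∇²F_i(z) ≼ L I for all z ∈ ℝ^d, where 0 < μ ≤ L, and let w_1, …, w_M > 0 with Σ_{i=1}^M w_i = 1. For τ ≥ 1 and learning rate η > 0 with η(μ + L) < 2, let A_i : ℝ^d → ℝ^d be the τ-fold composition of x ↦ x − η ∇F_i(x), and consider the global iteration x^{(t+1)} = Σ_{i=1}^M w_i A_i(x^{(t)}). Then the map x ↦ Σ_{i=1}^M w_i A_i(x) has a unique fixed point x̃ ∈ ℝ^d, and for all T ≥ 0, ‖x^{(T)} − x̃‖² ≤ (1 − ημ)^{2τT} ‖x^{(0)} − x̃‖².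 -/
open scoped RealInnerProductSpace

section Aux

variable {E : Type*} [NormedAddCommGroup E] [InnerProductSpace ℝ E]

lemma symm_quad_norm_bound (B : E →L[ℝ] E) (c : ℝ)
    (hsym : ∀ u v, ⟪B u, v⟫ = ⟪B v, u⟫)
    (hq : ∀ v, |⟪B v, v⟫| ≤ c * ‖v‖ ^ 2) (u : E) : ‖B u‖ ≤ c * ‖u‖ := by
  rcases eq_or_ne u 0 with rfl | hu
  · simp
  have hu2 : 0 < ‖u‖ := norm_pos_iff.mpr hu
  have hc : 0 ≤ c := by
    have h0 := hq u
    have h1 : (0 : ℝ) ≤ c * ‖u‖ ^ 2 := le_trans (abs_nonneg _) h0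
    by_contra h
    push_neg at h
    have : c * ‖u‖ ^ 2 < 0 := mul_neg_of_neg_of_pos h (pow_pos hu2 2)
    linarith
  rcases eq_or_ne (B u) 0 with hBu | hBu
  · rw [hBu, norm_zero]; positivity
  have hBu2 : 0 < ‖B u‖ := norm_pos_iff.mpr hBu
  set v : E := (‖u‖ / ‖B u‖) • B u with hv
  have hvnorm : ‖v‖ = ‖u‖ := by
    rw [hv, norm_smul, Real.norm_eq_abs, abs_div, abs_of_nonneg (norm_nonneg u),
      abs_of_nonneg (norm_nonneg (B u)), div_mul_cancel₀]
    exact ne_of_gt hBu2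
  have hinner : ⟪B u, v⟫ = ‖u‖ * ‖B u‖ := by
    rw [hv, inner_smul_right, real_inner_self_eq_norm_sq]
    field_simp
  have hkey : 4 * ⟪B u, v⟫ = ⟪B (u + v), u + v⟫ - ⟪B (u - v), u - v⟫ := by
    simp only [map_add, map_sub, inner_add_left, inner_add_right, inner_sub_left,
      inner_sub_right, hsym v u]
    ring
  have hpar : ‖u + v‖ ^ 2 + ‖u - v‖ ^ 2 = 2 * (‖u‖ ^ 2 + ‖v‖ ^ 2) := by
    have := parallelogram_law_with_norm ℝ u v
    nlinarith [this]
  have hle : 4 * (‖u‖ * ‖B u‖) ≤ 4 * (c * ‖u‖ ^ 2) := by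
    have h1 : ⟪B (u + v), u + v⟫ ≤ c * ‖u + v‖ ^ 2 := le_trans (le_abs_self _) (hq _)
    have h2 : -(c * ‖u - v‖ ^ 2) ≤ ⟪B (u - v), u - v⟫ := neg_le_of_abs_le (hq _)
    have h3 : 4 * ⟪B u, v⟫ ≤ c * ‖u + v‖ ^ 2 + c * ‖u - v‖ ^ 2 := by
      rw [hkey]; linarith
    have h4 : c * ‖u + v‖ ^ 2 + c * ‖u - v‖ ^ 2 = 4 * (c * ‖u‖ ^ 2) := by
      rw [← mul_add, hpar, hvnorm]; ring
    rw [← hinner]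
    linarith
  have h5 : ‖u‖ * ‖B u‖ ≤ ‖u‖ * (c * ‖u‖) := by nlinarith
  exact le_of_mul_le_mul_left h5 hu2

end Aux

section Step

variable {E : Type*} [NormedAddCommGroup E] [InnerProductSpace ℝ E] [CompleteSpace E]

/-- Over `ℝ`, the inverse of `toDual` as a genuine continuous linear map. -/
noncomputable def dualSymmCLM (E : Type*) [NormedAddCommGroup E] [InnerProductSpace ℝ E]
    [CompleteSpace E] : StrongDual ℝ E →L[ℝ] E :=
  LinearMap.mkContinuous
    { toFun := fun y => (InnerProductSpace.toDual ℝ E).symm y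
      map_add' := fun a b => map_add _ a b
      map_smul' := fun c y => by
        simp }
    1 (fun y => by simp)

@[simp] lemma dualSymmCLM_apply (y : StrongDual ℝ E) :
    dualSymmCLM E y = (InnerProductSpace.toDual ℝ E).symm y := rfl

lemma grad_step_lip (f : E → ℝ) (μ L η : ℝ) (hμ : 0 < μ) (hμL : μ ≤ L) (hη : 0 < η)
    (hηlt : η * (μ + L) < 2)
    (hf : ContDiff ℝ 2 f)
    (hlow : ∀ z v, μ * ‖v‖ ^ 2 ≤ ⟪fderiv ℝ (gradient f) z v, v⟫)
    (hupp : ∀ z v, ⟪fderiv ℝ (gradient f) z v, v⟫ ≤ L * ‖v‖ ^ 2)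
    (x y : E) :
    ‖(x - η • gradient f x) - (y - η • gradient f y)‖ ≤ (1 - η * μ) * ‖x - y‖ := by
  have hc1 : η * μ < 1 := by nlinarith
  have hc0 : 0 ≤ 1 - η * μ := by nlinarith
  have hgrad_eq : gradient f = fun x => dualSymmCLM E (fderiv ℝ f x) := rfl
  have hf' : ContDiff ℝ 1 (fderiv ℝ f) := hf.fderiv_right (by norm_num)
  have hgdiff : Differentiable ℝ (gradient f) := by
    rw [hgrad_eq]
    exact (dualSymmCLM E).differentiable.comp (hf'.differentiable one_ne_zero)
  have hsym : ∀ z u v, ⟪fderiv ℝ (gradient f) z u, v⟫ = ⟪fderiv ℝ (gradient f) z v, u⟫ := by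
    intro z u v
    have hsnd : IsSymmSndFDerivAt ℝ f z := (hf.contDiffAt).isSymmSndFDerivAt (by norm_num)
    have hcomp : fderiv ℝ (gradient f) z =
        (dualSymmCLM E).comp (fderiv ℝ (fderiv ℝ f) z) := by
      rw [hgrad_eq]
      exact ((dualSymmCLM E).hasFDerivAt.comp z
        ((hf'.differentiable one_ne_zero z).hasFDerivAt)).fderiv
    rw [hcomp]
    simp only [ContinuousLinearMap.coe_comp', Function.comp_apply, dualSymmCLM_apply]
    rw [InnerProductSpace.toDual_symm_apply, InnerProductSpace.toDual_symm_apply]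
    exact hsnd u v
  set G : E → E := fun x => x - η • gradient f x with hG
  have hGdiff : Differentiable ℝ G := differentiable_id.sub (hgdiff.const_smul η)
  have hGderiv : ∀ z, fderiv ℝ G z =
      ContinuousLinearMap.id ℝ E - η • fderiv ℝ (gradient f) z := by
    intro z
    exact ((hasFDerivAt_id z).sub (((hgdiff z).hasFDerivAt).const_smul η)).fderiv
  have hbound : ∀ z, ‖fderiv ℝ G z‖ ≤ 1 - η * μ := by
    intro z
    rw [hGderiv z]
    apply ContinuousLinearMap.opNorm_le_bound _ hc0
    intro v
    apply symm_quad_norm_bound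
    · intro a b
      simp only [ContinuousLinearMap.sub_apply, ContinuousLinearMap.id_apply,
        ContinuousLinearMap.smul_apply, inner_sub_left, inner_smul_left, inner_sub_right,
        inner_smul_right, RCLike.ofReal_real_eq_id, id_eq, conj_trivial]
      rw [hsym z a b, real_inner_comm a b]
    · intro v
      simp only [ContinuousLinearMap.sub_apply, ContinuousLinearMap.id_apply,
        ContinuousLinearMap.smul_apply, inner_sub_left, inner_smul_left,
        RCLike.ofReal_real_eq_id, id_eq, conj_trivial]
      rw [real_inner_self_eq_norm_sq]
      have h1 := hlow z v
      have h2 := hupp z v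
      rw [abs_le]
      constructor <;> nlinarith [sq_nonneg ‖v‖]
  have := Convex.norm_image_sub_le_of_norm_fderiv_le (fun z _ => hGdiff z)
    (fun z _ => hbound z) convex_univ (Set.mem_univ y) (Set.mem_univ x)
  simpa using this

end Step

/-- FedOpt with deterministic gradient-descent clients (server
step size 1) converges linearly to the unique fixed point of the aggregate
operator at rate `(1 - ημ)^{2τT}`. -/
theorem fedopt_gd_linear_convergence
    (d M : ℕ) (hd : 1 ≤ d) (hM : 1 ≤ M)
    (F : Fin M → EuclideanSpace ℝ (Fin d) → ℝ) (μ L : ℝ)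
    (hμ : 0 < μ) (hμL : μ ≤ L)
    (hF : ∀ i, ContDiff ℝ 2 (F i))
    (hHessLower : ∀ i, ∀ z v : EuclideanSpace ℝ (Fin d),
      μ * ‖v‖ ^ 2 ≤ ⟪fderiv ℝ (gradient (F i)) z v, v⟫)
    (hHessUpper : ∀ i, ∀ z v : EuclideanSpace ℝ (Fin d),
      ⟪fderiv ℝ (gradient (F i)) z v, v⟫ ≤ L * ‖v‖ ^ 2)
    (w : Fin M → ℝ) (hw : ∀ i, 0 < w i) (hw1 : ∑ i, w i = 1)
    (τ : ℕ) (hτ : 1 ≤ τ) (η : ℝ) (hη : 0 < η) (hηlt : η * (μ + L) < 2)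
    (A : Fin M → EuclideanSpace ℝ (Fin d) → EuclideanSpace ℝ (Fin d))
    (hA : ∀ i, A i = (fun x => x - η • gradient (F i) x)^[τ]) :
    ∃ xt : EuclideanSpace ℝ (Fin d),
      (∑ i, w i • A i xt) = xt
      ∧ (∀ y, (∑ i, w i • A i y) = y → y = xt)
      ∧ ∀ x : ℕ → EuclideanSpace ℝ (Fin d),
          (∀ t, x (t + 1) = ∑ i, w i • A i (x t)) →
          ∀ T : ℕ, ‖x T - xt‖ ^ 2 ≤ (1 - η * μ) ^ (2 * τ * T) * ‖x 0 - xt‖ ^ 2 := by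
  set c : ℝ := 1 - η * μ with hc
  have hc1 : η * μ < 1 := by nlinarith
  have hc0 : 0 ≤ c := by simp only [hc]; nlinarith
  have hclt : c < 1 := by simp only [hc]; nlinarith
  -- each client operator is (c^τ)-Lipschitz
  have hAlip : ∀ i (x y : EuclideanSpace ℝ (Fin d)), ‖A i x - A i y‖ ≤ c ^ τ * ‖x - y‖ := by
    intro i x y
    rw [hA i]
    have hstep := grad_step_lip (F i) μ L η hμ hμL hη hηlt (hF i) (hHessLower i) (hHessUpper i)
    clear hA
    clear hτ
    induction τ with
    | zero => simp
    | succ n ih =>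
      rw [Function.iterate_succ_apply', Function.iterate_succ_apply']
      calc ‖(fun x => x - η • gradient (F i) x)^[n] x - η •
              gradient (F i) ((fun x => x - η • gradient (F i) x)^[n] x) -
            ((fun x => x - η • gradient (F i) x)^[n] y - η •
              gradient (F i) ((fun x => x - η • gradient (F i) x)^[n] y))‖
          ≤ c * ‖(fun x => x - η • gradient (F i) x)^[n] x -
              (fun x => x - η • gradient (F i) x)^[n] y‖ := hstep _ _
        _ ≤ c * (c ^ n * ‖x - y‖) := by
            exact mul_le_mul_of_nonneg_left ih hc0
        _ = c ^ (n + 1) * ‖x - y‖ := by ring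
  -- the aggregate operator
  set Φ : EuclideanSpace ℝ (Fin d) → EuclideanSpace ℝ (Fin d) := fun x => ∑ i, w i • A i x with hΦ
  have hΦlip : ∀ x y : EuclideanSpace ℝ (Fin d), ‖Φ x - Φ y‖ ≤ c ^ τ * ‖x - y‖ := by
    intro x y
    have hdiff : Φ x - Φ y = ∑ i, w i • (A i x - A i y) := by
      simp only [hΦ, smul_sub, Finset.sum_sub_distrib]
    rw [hdiff]
    calc ‖∑ i, w i • (A i x - A i y)‖ ≤ ∑ i, ‖w i • (A i x - A i y)‖ :=
          norm_sum_le _ _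
      _ ≤ ∑ i, w i * (c ^ τ * ‖x - y‖) := by
          apply Finset.sum_le_sum
          intro i _
          rw [norm_smul, Real.norm_eq_abs, abs_of_pos (hw i)]
          exact mul_le_mul_of_nonneg_left (hAlip i x y) (le_of_lt (hw i))
      _ = c ^ τ * ‖x - y‖ := by rw [← Finset.sum_mul, hw1, one_mul]
  -- contraction
  have hK0 : 0 ≤ c ^ τ := pow_nonneg hc0 τ
  have hKlt : c ^ τ < 1 := pow_lt_one₀ hc0 hclt (by omega)
  set K : NNReal := Real.toNNReal (c ^ τ) with hKdef
  have hKcoe : (K : ℝ) = c ^ τ := Real.coe_toNNReal _ hK0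
  have hΦlipK : LipschitzWith K Φ := by
    apply LipschitzWith.of_dist_le_mul
    intro x y
    rw [dist_eq_norm, dist_eq_norm, hKcoe]
    exact hΦlip x y
  have hcontr : ContractingWith K Φ := by
    refine ⟨?_, hΦlipK⟩
    rw [← NNReal.coe_lt_coe, hKcoe, NNReal.coe_one]
    exact hKlt
  haveI : Nonempty (EuclideanSpace ℝ (Fin d)) := ⟨0⟩
  set xt : EuclideanSpace ℝ (Fin d) := ContractingWith.fixedPoint Φ hcontr with hxt
  have hfix : Φ xt = xt := ContractingWith.fixedPoint_isFixedPt hcontr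
  refine ⟨xt, hfix, ?_, ?_⟩
  · intro y hy
    exact ContractingWith.fixedPoint_unique hcontr hy
  · intro x hx T
    have hlin : ‖x T - xt‖ ≤ (c ^ τ) ^ T * ‖x 0 - xt‖ := by
      induction T with
      | zero => simp
      | succ n ih =>
        have h1 : x (n + 1) - xt = Φ (x n) - Φ xt := by rw [hx n, hfix]
        calc ‖x (n + 1) - xt‖ = ‖Φ (x n) - Φ xt‖ := by rw [h1]
          _ ≤ c ^ τ * ‖x n - xt‖ := hΦlip _ _
          _ ≤ c ^ τ * ((c ^ τ) ^ n * ‖x 0 - xt‖) := mul_le_mul_of_nonneg_left ih hK0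
          _ = (c ^ τ) ^ (n + 1) * ‖x 0 - xt‖ := by ring
    have h2 : ‖x T - xt‖ ^ 2 ≤ ((c ^ τ) ^ T * ‖x 0 - xt‖) ^ 2 :=
      pow_le_pow_left₀ (norm_nonneg _) hlin 2
    calc ‖x T - xt‖ ^ 2 ≤ ((c ^ τ) ^ T * ‖x 0 - xt‖) ^ 2 := h2
      _ = c ^ (2 * τ * T) * ‖x 0 - xt‖ ^ 2 := by
          rw [mul_pow, ← pow_mul, ← pow_mul]
          congr 1
          ring
end

section
/- For an integer τ ≥ 1 define z(x) = 2xτ / (1 − (1 − x)^{2τ}) for x ∈ (0, 1]. Then z is strictly increasing on (0, 1], and for all x with 0 < x ≤ 1/τ one has z(x) ≤ 2 / (1 − e^{−2}) < 3; in particular (1 − 1/τ)^{2τ} ≤ e^{−2}. -/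
/-- The function `z(x) = 2xτ / (1 - (1-x)^{2τ})` is strictly
increasing on (0,1], is at most `2/(1 - e⁻²) < 3` for `0 < x ≤ 1/τ`, and in
particular `(1 - 1/τ)^{2τ} ≤ e⁻²`. -/
theorem local_sgd_rate_factor_bound (τ : ℕ) (hτ : 1 ≤ τ) :
    StrictMonoOn (fun x : ℝ => 2 * x * τ / (1 - (1 - x) ^ (2 * τ)))
      (Set.Ioc (0 : ℝ) 1)
    ∧ (∀ x : ℝ, 0 < x → x ≤ 1 / τ →
        2 * x * τ / (1 - (1 - x) ^ (2 * τ)) ≤ 2 / (1 - Real.exp (-2)))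
    ∧ 2 / (1 - Real.exp (-2)) < 3
    ∧ (1 - 1 / (τ : ℝ)) ^ (2 * τ) ≤ Real.exp (-2) := by
  have hτR : (1 : ℝ) ≤ (τ : ℝ) := by exact_mod_cast hτ
  have hτpos : (0 : ℝ) < (τ : ℝ) := by linarith
  set S : ℝ → ℝ := fun x => ∑ k ∈ Finset.range (2 * τ), (1 - x) ^ k with hS
  have key : ∀ x : ℝ, 1 - (1 - x) ^ (2 * τ) = x * S x := by
    intro x
    have h := geom_sum_mul (1 - x) (2 * τ)
    simp only [hS]
    linear_combination h
  have hSge : ∀ x : ℝ, x ≤ 1 → 1 ≤ S x := by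
    intro x hx
    have : ((1 : ℝ) - x) ^ 0 ≤ S x := by
      apply Finset.single_le_sum (f := fun k => (1 - x) ^ k)
      · intro i _
        exact pow_nonneg (by linarith) i
      · exact Finset.mem_range.mpr (by omega)
    simpa using this
  have hSle : ∀ x y : ℝ, x ≤ y → y ≤ 1 → S y ≤ S x := by
    intro x y hxy hy1
    apply Finset.sum_le_sum
    intro i _
    exact pow_le_pow_left₀ (by linarith) (by linarith) i
  have hSlt : ∀ x y : ℝ, x < y → y ≤ 1 → S y < S x := by
    intro x y hxy hy1
    apply Finset.sum_lt_sum
    · intro i _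
      exact pow_le_pow_left₀ (by linarith) (by linarith) i
    · refine ⟨1, Finset.mem_range.mpr (by omega), ?_⟩
      simpa using hxy
  have hz : ∀ x : ℝ, x ≠ 0 →
      2 * x * (τ : ℝ) / (1 - (1 - x) ^ (2 * τ)) = (2 * τ) / S x := by
    intro x hx
    rw [key x, show 2 * x * (τ : ℝ) = x * (2 * τ) by ring,
      mul_div_mul_left _ _ hx]
  have h2τpos : (0 : ℝ) < 2 * (τ : ℝ) := by linarith
  -- the exponential bound
  have hbound : (1 - 1 / (τ : ℝ)) ^ (2 * τ) ≤ Real.exp (-2) := by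
    have h0 : (0 : ℝ) ≤ 1 - 1 / (τ : ℝ) := by
      have : 1 / (τ : ℝ) ≤ 1 := by
        rw [div_le_one hτpos]; exact hτR
      linarith
    have h1 : 1 - 1 / (τ : ℝ) ≤ Real.exp (-(1 / (τ : ℝ))) := by
      have := Real.add_one_le_exp (-(1 / (τ : ℝ)))
      linarith
    calc (1 - 1 / (τ : ℝ)) ^ (2 * τ)
        ≤ Real.exp (-(1 / (τ : ℝ))) ^ (2 * τ) := pow_le_pow_left₀ h0 h1 _
      _ = Real.exp ((2 * τ : ℕ) * (-(1 / (τ : ℝ)))) := by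
          rw [Real.exp_nat_mul]
      _ = Real.exp (-2) := by
          congr 1
          have : (τ : ℝ) ≠ 0 := ne_of_gt hτpos
          push_cast
          field_simp
  have hexp2 : Real.exp (-2) < 1 / 3 := by
    have h := Real.exp_one_gt_d9
    have h2 : Real.exp 2 = Real.exp 1 * Real.exp 1 := by
      rw [← Real.exp_add]; norm_num
    have h3 : (3 : ℝ) < Real.exp 2 := by nlinarith
    rw [show (-2 : ℝ) = -(2 : ℝ) by ring, Real.exp_neg]
    rw [inv_lt_comm₀ (by positivity) (by norm_num)] at *
    · linarith
  have hexp2' : (0 : ℝ) < 1 - Real.exp (-2) := by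
    have := Real.exp_pos (-2)
    linarith
  refine ⟨?_, ?_, ?_, hbound⟩
  · intro x hx y hy hxy
    simp only
    rw [hz x (ne_of_gt hx.1), hz y (ne_of_gt hy.1)]
    have hSy : (0 : ℝ) < S y := lt_of_lt_of_le one_pos (hSge y hy.2)
    exact div_lt_div_of_pos_left h2τpos hSy (hSlt x y hxy hy.2)
  · intro x hx hxle
    have ha : (0 : ℝ) < 1 / (τ : ℝ) := by positivity
    have ha1 : 1 / (τ : ℝ) ≤ 1 := by rw [div_le_one hτpos]; exact hτR
    have hx1 : x ≤ 1 := le_trans hxle ha1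
    have hSx : (0 : ℝ) < S x := lt_of_lt_of_le one_pos (hSge x hx1)
    have hSa : (0 : ℝ) < S (1 / (τ : ℝ)) :=
      lt_of_lt_of_le one_pos (hSge _ ha1)
    rw [hz x (ne_of_gt hx)]
    have step1 : (2 * (τ : ℝ)) / S x ≤ (2 * τ) / S (1 / (τ : ℝ)) := by
      apply div_le_div_of_nonneg_left (le_of_lt h2τpos) hSa
      exact hSle _ _ hxle ha1
    have step2 : (2 * (τ : ℝ)) / S (1 / (τ : ℝ))
        = 2 / (1 - (1 - 1 / (τ : ℝ)) ^ (2 * τ)) := by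
      rw [← hz (1 / (τ : ℝ)) (ne_of_gt ha)]
      have : 2 * (1 / (τ : ℝ)) * (τ : ℝ) = 2 := by
        field_simp
      rw [this]
    have step3 : 2 / (1 - (1 - 1 / (τ : ℝ)) ^ (2 * τ))
        ≤ 2 / (1 - Real.exp (-2)) := by
      apply div_le_div_of_nonneg_left (by norm_num) hexp2'
      linarith
    linarith [step1, step2.le, step2.ge, step3]
  · rw [div_lt_iff₀ hexp2']
    linarith
end

section
/- Let F : ℝ^d → ℝ be differentiable with ‖∇F(x) − ∇F(y)‖ ≤ L‖x − y‖ for all x, y. Let τ ≥ 1 and let A_0, …, A_{τ−1} be symmetric positive-definite d×d matrices with Σ_{k=0}^{τ−1} A_k = I and ‖A_k‖_op ≤ Λ/τ for each k, for some Λ > 0. Then for any points x, x_0, …, x_{τ−1} ∈ ℝ^d, ‖∇F(x) − Σ_{k=0}^{τ−1} A_k ∇F(x_k)‖² ≤ (L² Λ / τ) Σ_{k=0}^{τ−1} ‖x − x_k‖². -/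
open RealInnerProductSpace

lemma mApp_symm {d : ℕ} (A : Matrix (Fin d) (Fin d) ℝ) (h : A.IsHermitian)
    (u v : EuclideanSpace ℝ (Fin d)) : ⟪mApp A u, v⟫ = ⟪u, mApp A v⟫ := by
  have hsa : ContinuousLinearMap.adjoint (mApp A) = mApp A := by
    have : star (mApp A) = mApp A := by
      rw [mApp, ← map_star]
      exact congrArg _ h
    simpa [ContinuousLinearMap.star_eq_adjoint] using this
  rw [← hsa, ContinuousLinearMap.adjoint_inner_left, hsa]

lemma mApp_pos {d : ℕ} (A : Matrix (Fin d) (Fin d) ℝ) (h : A.PosDef)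
    (u : EuclideanSpace ℝ (Fin d)) : 0 ≤ ⟪mApp A u, u⟫ := by
  have hps := h.posSemidef.dotProduct_mulVec_nonneg (fun i => u i)
  simpa [dotProduct, PiLp.inner_apply, mApp, Matrix.mulVec, mul_comm] using hps

lemma pos_cs {E : Type*} [NormedAddCommGroup E] [InnerProductSpace ℝ E] (T : E →L[ℝ] E)
    (hsym : ∀ u v : E, ⟪T u, v⟫ = ⟪u, T v⟫) (hpos : ∀ u : E, 0 ≤ ⟪T u, u⟫) (u w : E) :
    ⟪T u, w⟫ ≤ Real.sqrt ⟪T u, u⟫ * Real.sqrt ⟪T w, w⟫ := by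
  set a : ℝ := ⟪T u, u⟫ with ha
  set b : ℝ := ⟪T u, w⟫ with hb
  set c : ℝ := ⟪T w, w⟫ with hc
  have key : ∀ t : ℝ, 0 ≤ c * (t * t) + (-2 * b) * t + a := by
    intro t
    have h0 := hpos (u - t • w)
    have hwu : ⟪T w, u⟫ = b := by rw [hsym, real_inner_comm]
    have hexp : ⟪T (u - t • w), u - t • w⟫ = c * (t * t) + (-2 * b) * t + a := by
      simp only [map_sub, map_smul, inner_sub_left, inner_sub_right,
        real_inner_smul_left, real_inner_smul_right, hwu, ← ha, ← hb, ← hc]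
      ring
    rw [hexp] at h0
    exact h0
  have hd := discrim_le_zero key
  rw [discrim] at hd
  have hb2 : b ^ 2 ≤ a * c := by nlinarith
  calc b ≤ |b| := le_abs_self b
    _ = Real.sqrt (b ^ 2) := (Real.sqrt_sq_eq_abs b).symm
    _ ≤ Real.sqrt (a * c) := Real.sqrt_le_sqrt hb2
    _ = Real.sqrt a * Real.sqrt c := Real.sqrt_mul (hpos u) _

/-- Error bound for the locally corrected client update: the
gradient at the anchor point minus the preconditioner-weighted average of local
gradients is controlled by the spread of the local iterates. -/
theorem local_correction_gradient_error
    (d τ : ℕ) (hτ : 1 ≤ τ)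
    (F : EuclideanSpace ℝ (Fin d) → ℝ) (L Λ : ℝ) (hΛ : 0 < Λ)
    (hdiff : Differentiable ℝ F)
    (hLip : ∀ x y : EuclideanSpace ℝ (Fin d),
      ‖gradient F x - gradient F y‖ ≤ L * ‖x - y‖)
    (A : Fin τ → Matrix (Fin d) (Fin d) ℝ)
    (hAsymm : ∀ k, (A k).IsSymm) (hApd : ∀ k, (A k).PosDef)
    (hAsum : ∑ k, A k = (1 : Matrix (Fin d) (Fin d) ℝ))
    (hAop : ∀ k, opNorm (A k) ≤ Λ / τ)
    (x : EuclideanSpace ℝ (Fin d)) (xl : Fin τ → EuclideanSpace ℝ (Fin d)) :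
    ‖gradient F x - ∑ k, mApp (A k) (gradient F (xl k))‖ ^ 2
      ≤ (L ^ 2 * Λ / τ) * ∑ k, ‖x - xl k‖ ^ 2 := by
  set g := gradient F with hgdef
  set T : Fin τ → _ := fun k => mApp (A k) with hT
  set v : Fin τ → EuclideanSpace ℝ (Fin d) := fun k => g x - g (xl k) with hv
  set s : EuclideanSpace ℝ (Fin d) := g x - ∑ k, mApp (A k) (g (xl k)) with hs
  have hτpos : (0:ℝ) < τ := by exact_mod_cast hτ
  have hsym : ∀ k (u w : EuclideanSpace ℝ (Fin d)), ⟪T k u, w⟫ = ⟪u, T k w⟫ :=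
    fun k => mApp_symm (A k) (hApd k).isHermitian
  have hpos : ∀ k (u : EuclideanSpace ℝ (Fin d)), 0 ≤ ⟪T k u, u⟫ :=
    fun k => mApp_pos (A k) (hApd k)
  have hsum1 : (∑ k, T k) = (1 : EuclideanSpace ℝ (Fin d) →L[ℝ] EuclideanSpace ℝ (Fin d)) := by
    simp only [hT, mApp, ← map_sum, hAsum, map_one]
  have hsv : s = ∑ k, T k (v k) := by
    have : ∑ k, T k (v k) = (∑ k, T k) (g x) - ∑ k, T k (g (xl k)) := by
      rw [ContinuousLinearMap.sum_apply, ← Finset.sum_sub_distrib]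
      simp [hv, map_sub]
    rw [this, hsum1, hs]
    rfl
  -- abbreviations for the quadratic forms
  set a : Fin τ → ℝ := fun k => ⟪T k (v k), v k⟫ with haf
  set B : ℝ := ∑ k, a k with hB
  have haknn : ∀ k, 0 ≤ a k := fun k => hpos k (v k)
  have hBnn : 0 ≤ B := Finset.sum_nonneg fun k _ => haknn k
  -- step 1 : ‖s‖² ≤ B
  have hstep1 : ‖s‖ ^ 2 ≤ B := by
    have hcs : ∑ k, ⟪T k (v k), s⟫ ≤ Real.sqrt B * ‖s‖ := by
      have h1 : ∀ k, ⟪T k (v k), s⟫ ≤ Real.sqrt (a k) * Real.sqrt (⟪T k s, s⟫) :=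
        fun k => pos_cs (T k) (hsym k) (hpos k) (v k) s
      have h2 : ∑ k, Real.sqrt (a k) * Real.sqrt (⟪T k s, s⟫)
          ≤ Real.sqrt B * ‖s‖ := by
        have hsum2 : ∑ k, ⟪T k s, s⟫ = ‖s‖ ^ 2 := by
          rw [← sum_inner, ← ContinuousLinearMap.sum_apply, hsum1,
            ContinuousLinearMap.one_apply, real_inner_self_eq_norm_sq]
        have hCS := Finset.sum_sq_le_sum_mul_sum_of_sq_eq_mul (Finset.univ (α := Fin τ))
          (r := fun k => Real.sqrt (a k) * Real.sqrt (⟪T k s, s⟫))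
          (f := a) (g := fun k => ⟪T k s, s⟫)
          (fun k _ => haknn k) (fun k _ => hpos k s)
          (fun k _ => by
            rw [mul_pow, Real.sq_sqrt (haknn k), Real.sq_sqrt (hpos k s)])
        rw [hsum2] at hCS
        have hrnn : 0 ≤ ∑ k, Real.sqrt (a k) * Real.sqrt (⟪T k s, s⟫) :=
          Finset.sum_nonneg fun k _ =>
            mul_nonneg (Real.sqrt_nonneg _) (Real.sqrt_nonneg _)
        have := (Real.le_sqrt hrnn (mul_nonneg hBnn (sq_nonneg _))).2 hCS
        calc ∑ k, Real.sqrt (a k) * Real.sqrt (⟪T k s, s⟫)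
            ≤ Real.sqrt (B * ‖s‖ ^ 2) := this
          _ = Real.sqrt B * ‖s‖ := by
              rw [Real.sqrt_mul hBnn, Real.sqrt_sq (norm_nonneg s)]
      exact le_trans (Finset.sum_le_sum fun k _ => h1 k) h2
    have hss : ‖s‖ ^ 2 = ∑ k, ⟪T k (v k), s⟫ := by
      rw [← real_inner_self_eq_norm_sq]
      conv_lhs => rw [hsv]
      rw [sum_inner, ← hsv]
    have h3 : ‖s‖ ^ 2 ≤ Real.sqrt B * ‖s‖ := hss ▸ hcs
    nlinarith [Real.sq_sqrt hBnn, Real.sqrt_nonneg B, norm_nonneg s]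
  -- step 2 : B ≤ (Λ/τ) * L² * Σ ‖x - xl k‖²
  have hstep2 : B ≤ ∑ k, (Λ / τ) * (L ^ 2 * ‖x - xl k‖ ^ 2) := by
    apply Finset.sum_le_sum
    intro k _
    have h1 : a k ≤ ‖T k (v k)‖ * ‖v k‖ := real_inner_le_norm _ _
    have h2 : ‖T k (v k)‖ ≤ (Λ / τ) * ‖v k‖ := by
      calc ‖T k (v k)‖ ≤ ‖T k‖ * ‖v k‖ := (T k).le_opNorm _
        _ ≤ (Λ / τ) * ‖v k‖ := by
            exact mul_le_mul_of_nonneg_right (hAop k) (norm_nonneg _)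
    have h3 : ‖v k‖ ≤ L * ‖x - xl k‖ := hLip x (xl k)
    have h4 : ‖v k‖ ^ 2 ≤ L ^ 2 * ‖x - xl k‖ ^ 2 := by
      rw [← mul_pow]
      exact pow_le_pow_left₀ (norm_nonneg _) h3 2
    have hΛτ : 0 ≤ Λ / τ := le_of_lt (div_pos hΛ hτpos)
    calc a k ≤ ‖T k (v k)‖ * ‖v k‖ := h1
      _ ≤ ((Λ / τ) * ‖v k‖) * ‖v k‖ := mul_le_mul_of_nonneg_right h2 (norm_nonneg _)
      _ = (Λ / τ) * ‖v k‖ ^ 2 := by ring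
      _ ≤ (Λ / τ) * (L ^ 2 * ‖x - xl k‖ ^ 2) := mul_le_mul_of_nonneg_left h4 hΛτ
  calc ‖s‖ ^ 2 ≤ B := hstep1
    _ ≤ ∑ k, (Λ / τ) * (L ^ 2 * ‖x - xl k‖ ^ 2) := hstep2
    _ = (L ^ 2 * Λ / τ) * ∑ k, ‖x - xl k‖ ^ 2 := by
        rw [Finset.mul_sum]; congr 1; ext k; ring
end

section
/- Let F_1, …, F_M : ℝ^d → ℝ be differentiable with ‖∇F_i(x) − ∇F_i(y)‖ ≤ L‖x − y‖ for all x, y and all i, let w_i > 0 with Σ_{i=1}^M w_i = 1, and suppose F = Σ_{i=1}^M w_i F_i is bounded below by F_inf. Consider T rounds of FedOpt with local correction: at round t, each client i starts from x_i^{(t,0)} = x^{(t)} and runs τ_i ≥ 1 local steps x_i^{(t,k+1)} = x_i^{(t,k)} − η_i B_i^{(t,k)} ∇F_i(x_i^{(t,k)}) with ‖B_i^{(t,k)} ∇F_i(x_i^{(t,k)})‖ ≤ G, forms the corrected update h_i^{(t)} = Σ_{k=0}^{τ_i−1} A_i^{(t,k)} ∇F_i(x_i^{(t,k)}) where the A_i^{(t,k)}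 are symmetric positive-definite matrices with Σ_{k=0}^{τ_i−1} A_i^{(t,k)} = I and ‖A_i^{(t,k)}‖_op ≤ Λ/τ_i, and the server sets x^{(t+1)} = x^{(t)} − α Σ_{i=1}^M w_i h_i^{(t)}. If the server step size is α = Σ_{i=1}^M w_i η_i τ_i and satisfies α L ≤ 1, then (1/T) Σ_{t=0}^{T−1} ‖∇F(x^{(t)})‖² ≤ 2(F(x^{(0)}) − F_inf) / (α T) + L² Λ G² Σ_{i=1}^M w_i η_i² τ_i². -/
open scoped RealInnerProductSpace

lemma mApp_selfAdjoint {d : ℕ} {A : Matrix (Fin d) (Fin d) ℝ} (h : A.IsSymm)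
    (a b : EuclideanSpace ℝ (Fin d)) : ⟪mApp A a, b⟫ = ⟪a, mApp A b⟫ := by
  have hstar : star A = A := by
    rw [Matrix.star_eq_conjTranspose, Matrix.conjTranspose_eq_transpose_of_trivial]
    exact h
  have hsa : ContinuousLinearMap.adjoint (mApp A) = mApp A := by
    rw [← ContinuousLinearMap.star_eq_adjoint]
    show star (Matrix.toEuclideanCLM (𝕜 := ℝ) A) = _
    rw [← map_star, hstar]; rfl
  conv_lhs => rw [← hsa]
  exact ContinuousLinearMap.adjoint_inner_left (mApp A) b a

lemma mApp_inner_nonneg {d : ℕ} {A : Matrix (Fin d) (Fin d) ℝ} (h : A.PosSemidef)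
    (a : EuclideanSpace ℝ (Fin d)) : 0 ≤ ⟪a, mApp A a⟫ := by
  have h2 := h.dotProduct_mulVec_nonneg ((WithLp.equiv 2 _) a)
  have he : ⟪a, mApp A a⟫
      = dotProduct (star ((WithLp.equiv 2 _) a)) (A.mulVec ((WithLp.equiv 2 _) a)) := by
    simp only [PiLp.inner_apply, RCLike.inner_apply, dotProduct, Pi.star_apply,
      star_trivial, starRingEnd_apply]
    refine Finset.sum_congr rfl fun i _ => ?_
    rw [mul_comm]; rfl
  rw [he]; exact h2

variable {E : Type*} [NormedAddCommGroup E] [InnerProductSpace ℝ E]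

/-- Jensen for the squared norm. -/
lemma norm_sq_sum_smul_le {ι : Type*} (s : Finset ι) (w : ι → ℝ) (u : ι → E)
    (hw : ∀ i ∈ s, 0 ≤ w i) (hw1 : ∑ i ∈ s, w i = 1) :
    ‖∑ i ∈ s, w i • u i‖ ^ 2 ≤ ∑ i ∈ s, w i * ‖u i‖ ^ 2 := by
  have expand : ‖∑ i ∈ s, w i • u i‖ ^ 2
      = ∑ i ∈ s, ∑ j ∈ s, w i * w j * ⟪u i, u j⟫ := by
    rw [← real_inner_self_eq_norm_sq, sum_inner]
    refine Finset.sum_congr rfl fun i hi => ?_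
    rw [real_inner_smul_left, inner_sum, Finset.mul_sum]
    refine Finset.sum_congr rfl fun j hj => ?_
    rw [real_inner_smul_right]; ring
  rw [expand]
  have hb : ∀ i ∈ s, ∀ j ∈ s, w i * w j * ⟪u i, u j⟫
      ≤ w i * w j * (‖u i‖ ^ 2 / 2 + ‖u j‖ ^ 2 / 2) := by
    intro i hi j hj
    refine mul_le_mul_of_nonneg_left ?_ (mul_nonneg (hw i hi) (hw j hj))
    calc ⟪u i, u j⟫ ≤ ‖u i‖ * ‖u j‖ := real_inner_le_norm _ _
      _ ≤ ‖u i‖ ^ 2 / 2 + ‖u j‖ ^ 2 / 2 := by nlinarith [sq_nonneg (‖u i‖ - ‖u j‖)]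
  calc ∑ i ∈ s, ∑ j ∈ s, w i * w j * ⟪u i, u j⟫
      ≤ ∑ i ∈ s, ∑ j ∈ s, w i * w j * (‖u i‖ ^ 2 / 2 + ‖u j‖ ^ 2 / 2) :=
        Finset.sum_le_sum fun i hi => Finset.sum_le_sum fun j hj => hb i hi j hj
    _ = ∑ i ∈ s, w i * ‖u i‖ ^ 2 := by
        have h1 : ∀ i ∈ s, ∑ j ∈ s, w i * w j * (‖u i‖ ^ 2 / 2 + ‖u j‖ ^ 2 / 2)
            = w i * ‖u i‖ ^ 2 / 2 + w i * (∑ j ∈ s, w j * ‖u j‖ ^ 2) / 2 := by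
          intro i hi
          rw [Finset.sum_congr rfl (fun j hj => by ring :
            ∀ j ∈ s, w i * w j * (‖u i‖ ^ 2 / 2 + ‖u j‖ ^ 2 / 2)
              = w i * ‖u i‖ ^ 2 / 2 * w j + w i / 2 * (w j * ‖u j‖ ^ 2))]
          rw [Finset.sum_add_distrib, ← Finset.mul_sum, ← Finset.mul_sum, hw1]
          ring
        rw [Finset.sum_congr rfl h1, Finset.sum_add_distrib]
        have : ∑ i ∈ s, (w i * ∑ j ∈ s, w j * ‖u j‖ ^ 2) / 2
            = (∑ i ∈ s, w i) * (∑ j ∈ s, w j * ‖u j‖ ^ 2) / 2 := by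
          rw [← Finset.sum_div, ← Finset.sum_mul]
        rw [this, hw1, ← Finset.sum_div]
        ring

/-- Operator Cauchy–Schwarz for a PSD partition of the identity. -/
lemma norm_sq_sum_opApply_le {ι : Type*} (s : Finset ι) (S : ι → E →L[ℝ] E) (v : ι → E)
    (hsymm : ∀ i ∈ s, ∀ a b : E, ⟪S i a, b⟫ = ⟪a, S i b⟫)
    (hpos : ∀ i ∈ s, ∀ a : E, 0 ≤ ⟪a, S i a⟫)
    (hsum : ∑ i ∈ s, S i = 1) :
    ‖∑ i ∈ s, S i (v i)‖ ^ 2 ≤ ∑ i ∈ s, ⟪v i, S i (v i)⟫ := by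
  set u := ∑ i ∈ s, S i (v i) with hu
  have huu : ‖u‖ ^ 2 = ∑ i ∈ s, ⟪u, S i (v i)⟫ := by
    rw [← real_inner_self_eq_norm_sq, hu, inner_sum]
  have hterm : ∀ i ∈ s, 2 * ⟪u, S i (v i)⟫ ≤ ⟪u, S i u⟫ + ⟪v i, S i (v i)⟫ := by
    intro i hi
    have h0 := hpos i hi (u - v i)
    have hmaps : ⟪v i, S i u⟫ = ⟪u, S i (v i)⟫ := by
      rw [← hsymm i hi u (v i), real_inner_comm]
    simp only [map_sub, inner_sub_left, inner_sub_right] at h0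
    linarith [h0, hmaps]
  have hsum2 : ∑ i ∈ s, ⟪u, S i u⟫ = ‖u‖ ^ 2 := by
    rw [← real_inner_self_eq_norm_sq]
    rw [← inner_sum]
    congr 1
    rw [show ∑ i ∈ s, S i u = (∑ i ∈ s, S i) u by
      simp [ContinuousLinearMap.sum_apply], hsum]
    rfl
  have h2 : 2 * ‖u‖ ^ 2 ≤ ‖u‖ ^ 2 + ∑ i ∈ s, ⟪v i, S i (v i)⟫ := by
    calc 2 * ‖u‖ ^ 2 = ∑ i ∈ s, 2 * ⟪u, S i (v i)⟫ := by
          rw [huu, Finset.mul_sum]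
      _ ≤ ∑ i ∈ s, (⟪u, S i u⟫ + ⟪v i, S i (v i)⟫) := Finset.sum_le_sum hterm
      _ = ‖u‖ ^ 2 + ∑ i ∈ s, ⟪v i, S i (v i)⟫ := by
          rw [Finset.sum_add_distrib, hsum2]
  linarith

/-- Descent lemma for functions with Lipschitz gradient. -/
lemma descent_lemma [CompleteSpace E] (f : E → ℝ) (L : ℝ) (hL : 0 ≤ L)
    (hdiff : Differentiable ℝ f)
    (hLip : ∀ x y : E, ‖gradient f x - gradient f y‖ ≤ L * ‖x - y‖)
    (x v : E) :
    f (x + v) ≤ f x + ⟪gradient f x, v⟫ + L / 2 * ‖v‖ ^ 2 := by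
  -- gradient is continuous
  have hgc : Continuous (gradient f) := by
    rcases le_iff_lt_or_eq.mp hL with hL' | hL'
    · exact (LipschitzWith.of_dist_le_mul (K := ⟨L, hL⟩) fun a b => by
        rw [dist_eq_norm, dist_eq_norm]; exact hLip a b).continuous
    · have : ∀ a b : E, gradient f a = gradient f b := by
        intro a b
        have h := hLip a b
        rw [← hL', zero_mul] at h
        have h2 := le_antisymm h (norm_nonneg _)
        rwa [norm_eq_zero, sub_eq_zero] at h2
      exact continuous_const.congr fun a => (this (0:E) a)
  have key : ∀ s : ℝ, HasDerivAt (fun s : ℝ => f (x + s • v)) ⟪gradient f (x + s • v), v⟫ s := by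
    intro s
    have h1 : HasFDerivAt f ((InnerProductSpace.toDual ℝ E) (gradient f (x + s • v))) (x + s • v) :=
      ((hdiff _).hasGradientAt).hasFDerivAt
    have h2 : HasDerivAt (fun s : ℝ => x + s • v) v s := by
      simpa using ((hasDerivAt_id s).smul_const v).const_add x
    exact h1.comp_hasDerivAt s h2
  have hcont : Continuous fun s : ℝ => ⟪gradient f (x + s • v), v⟫ := by
    exact (Continuous.inner (hgc.comp (by continuity)) continuous_const)
  have hFTC : f (x + v) - f x = ∫ s in (0:ℝ)..1, ⟪gradient f (x + s • v), v⟫ := by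
    have := intervalIntegral.integral_eq_sub_of_hasDerivAt
      (f := fun s : ℝ => f (x + s • v)) (f' := fun s => ⟪gradient f (x + s • v), v⟫)
      (a := 0) (b := 1) (fun s _ => key s) (hcont.intervalIntegrable 0 1)
    simpa using this.symm
  have hmono : ∫ s in (0:ℝ)..1, ⟪gradient f (x + s • v), v⟫
      ≤ ∫ s in (0:ℝ)..1, (⟪gradient f x, v⟫ + L * s * ‖v‖ ^ 2) := by
    apply intervalIntegral.integral_mono_on zero_le_one (hcont.intervalIntegrable 0 1)
      ((by continuity : Continuous fun s : ℝ => ⟪gradient f x, v⟫ + L * s * ‖v‖ ^ 2).intervalIntegrable 0 1)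
    intro s hs
    have : ⟪gradient f (x + s • v), v⟫ - ⟪gradient f x, v⟫
        = ⟪gradient f (x + s • v) - gradient f x, v⟫ := by rw [inner_sub_left]
    have hb : ⟪gradient f (x + s • v) - gradient f x, v⟫ ≤ L * s * ‖v‖ ^ 2 := by
      calc ⟪gradient f (x + s • v) - gradient f x, v⟫
          ≤ ‖gradient f (x + s • v) - gradient f x‖ * ‖v‖ := real_inner_le_norm _ _
        _ ≤ (L * ‖(x + s • v) - x‖) * ‖v‖ :=
            mul_le_mul_of_nonneg_right (hLip _ _) (norm_nonneg _)
        _ = L * (|s| * ‖v‖) * ‖v‖ := by rw [add_sub_cancel_left, norm_smul]; norm_num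
        _ = L * |s| * ‖v‖ ^ 2 := by ring
        _ ≤ L * s * ‖v‖ ^ 2 := by
            rw [abs_of_nonneg hs.1]
    linarith [this ▸ hb]
  have hint : ∫ s in (0:ℝ)..1, (⟪gradient f x, v⟫ + L * s * ‖v‖ ^ 2)
      = ⟪gradient f x, v⟫ + L / 2 * ‖v‖ ^ 2 := by
    rw [intervalIntegral.integral_add (intervalIntegrable_const)
      ((by continuity : Continuous fun s : ℝ => L * s * ‖v‖ ^ 2).intervalIntegrable 0 1)]
    simp only [intervalIntegral.integral_const, smul_eq_mul, sub_zero, one_mul]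
    have : ∫ s in (0:ℝ)..1, L * s * ‖v‖ ^ 2 = (L * ‖v‖ ^ 2) * ∫ s in (0:ℝ)..1, s := by
      rw [← intervalIntegral.integral_const_mul]
      exact intervalIntegral.integral_congr fun s _ => by ring
    rw [this, integral_id]
    ring
  linarith [hFTC, hmono, hint ▸ hmono]

set_option maxHeartbeats 1000000 in
/-- Convergence guarantee (Theorem 3) for FedOpt with
deterministic adaptive client optimizers and the local correction technique. -/
theorem fedopt_local_correction_convergence
    (d M T : ℕ) (hd : 1 ≤ d) (hM : 1 ≤ M) (hT : 1 ≤ T)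
    (F : Fin M → EuclideanSpace ℝ (Fin d) → ℝ) (L : ℝ) (hL : 0 < L)
    (hdiff : ∀ i, Differentiable ℝ (F i))
    (hLip : ∀ i, ∀ x y : EuclideanSpace ℝ (Fin d),
      ‖gradient (F i) x - gradient (F i) y‖ ≤ L * ‖x - y‖)
    (w : Fin M → ℝ) (hw : ∀ i, 0 < w i) (hw1 : ∑ i, w i = 1)
    (Finf : ℝ) (hFinf : ∀ x : EuclideanSpace ℝ (Fin d), Finf ≤ ∑ i, w i * F i x)
    (τ : Fin M → ℕ) (hτ : ∀ i, 1 ≤ τ i)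
    (η : Fin M → ℝ) (hη : ∀ i, 0 < η i)
    (G Λ : ℝ) (hG : 0 ≤ G) (hΛ : 0 < Λ)
    (B A : ℕ → Fin M → ℕ → Matrix (Fin d) (Fin d) ℝ)
    (xg : ℕ → EuclideanSpace ℝ (Fin d))
    (xl : ℕ → Fin M → ℕ → EuclideanSpace ℝ (Fin d))
    (hx0 : ∀ t i, xl t i 0 = xg t)
    (hlrec : ∀ t i k, k < τ i →
      xl t i (k + 1)
        = xl t i k - η i • mApp (B t i k) (gradient (F i) (xl t i k)))
    (hGbound : ∀ t i k, k < τ i →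
      ‖mApp (B t i k) (gradient (F i) (xl t i k))‖ ≤ G)
    (hBsymm : ∀ t i k, k < τ i → (B t i k).IsSymm)
    (hBpd : ∀ t i k, k < τ i → (B t i k).PosDef)
    (hAsymm : ∀ t i k, k < τ i → (A t i k).IsSymm)
    (hApd : ∀ t i k, k < τ i → (A t i k).PosDef)
    (hAsum : ∀ t i,
      ∑ k ∈ Finset.range (τ i), A t i k = (1 : Matrix (Fin d) (Fin d) ℝ))
    (hAop : ∀ t i k, k < τ i → opNorm (A t i k) ≤ Λ / τ i)
    (α : ℝ) (hα : α = ∑ i, w i * η i * τ i) (hαL : α * L ≤ 1)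
    (hgrec : ∀ t, xg (t + 1)
      = xg t - α • ∑ i, w i •
          ∑ k ∈ Finset.range (τ i), mApp (A t i k) (gradient (F i) (xl t i k))) :
    (1 / T : ℝ) * ∑ t ∈ Finset.range T,
        ‖gradient (fun y => ∑ i, w i * F i y) (xg t)‖ ^ 2
      ≤ 2 * ((∑ i, w i * F i (xg 0)) - Finf) / (α * T)
        + L ^ 2 * Λ * G ^ 2 * ∑ i, w i * η i ^ 2 * (τ i : ℝ) ^ 2 := by
  classical
  set Fb : EuclideanSpace ℝ (Fin d) → ℝ := fun y => ∑ i, w i * F i y with hFbdef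
  set gF : EuclideanSpace ℝ (Fin d) → EuclideanSpace ℝ (Fin d) := fun x => ∑ i, w i • gradient (F i) x with hgFdef
  -- gradient of Fb
  have hgrad : ∀ x : (EuclideanSpace ℝ (Fin d)), HasGradientAt Fb (gF x) x := by
    intro x
    have hFd : HasFDerivAt Fb
        (∑ i, w i • ((InnerProductSpace.toDual ℝ (EuclideanSpace ℝ (Fin d))) (gradient (F i) x))) x := by
      apply HasFDerivAt.fun_sum
      intro i _
      exact ((hdiff i x).hasGradientAt.hasFDerivAt).const_mul (w i)
    have heq : (∑ i, w i • ((InnerProductSpace.toDual ℝ (EuclideanSpace ℝ (Fin d))) (gradient (F i) x)))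
        = (InnerProductSpace.toDual ℝ (EuclideanSpace ℝ (Fin d))) (gF x) := by
      apply ContinuousLinearMap.ext
      intro y
      simp only [ContinuousLinearMap.sum_apply, ContinuousLinearMap.smul_apply,
        InnerProductSpace.toDual_apply_apply, hgFdef, sum_inner, real_inner_smul_left,
        smul_eq_mul]
    rw [heq] at hFd
    exact hasGradientAt_iff_hasFDerivAt.mpr hFd
  have hgradeq : ∀ x : (EuclideanSpace ℝ (Fin d)), gradient Fb x = gF x := fun x => (hgrad x).gradient
  have hFbdiff : Differentiable ℝ Fb := fun x => (hgrad x).differentiableAt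
  have hgFLip : ∀ x y : (EuclideanSpace ℝ (Fin d)), ‖gradient Fb x - gradient Fb y‖ ≤ L * ‖x - y‖ := by
    intro x y
    rw [hgradeq, hgradeq]
    have h1 : gF x - gF y = ∑ i, w i • (gradient (F i) x - gradient (F i) y) := by
      rw [hgFdef]
      simp only [smul_sub]
      rw [Finset.sum_sub_distrib]
    rw [h1]
    calc ‖∑ i, w i • (gradient (F i) x - gradient (F i) y)‖
        ≤ ∑ i, ‖w i • (gradient (F i) x - gradient (F i) y)‖ := norm_sum_le _ _
      _ ≤ ∑ i, w i * (L * ‖x - y‖) := by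
          apply Finset.sum_le_sum
          intro i _
          rw [norm_smul, Real.norm_eq_abs, abs_of_pos (hw i)]
          exact mul_le_mul_of_nonneg_left (hLip i x y) (hw i).le
      _ = L * ‖x - y‖ := by rw [← Finset.sum_mul, hw1, one_mul]
  -- iterate distance bound
  have hdist : ∀ t i k, k ≤ τ i → ‖xl t i k - xg t‖ ≤ k * (η i * G) := by
    intro t i k
    induction k with
    | zero => intro _; simp [hx0]
    | succ k ih =>
      intro hk
      have hk' : k < τ i := hk
      have ihk := ih (Nat.le_of_lt hk')
      rw [hlrec t i k hk']
      have hsplit : xl t i k - η i • mApp (B t i k) (gradient (F i) (xl t i k)) - xg t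
          = (xl t i k - xg t) - η i • mApp (B t i k) (gradient (F i) (xl t i k)) := by
        abel
      rw [hsplit]
      have hstep : ‖η i • mApp (B t i k) (gradient (F i) (xl t i k))‖ ≤ η i * G := by
        rw [norm_smul, Real.norm_eq_abs, abs_of_pos (hη i)]
        exact mul_le_mul_of_nonneg_left (hGbound t i k hk') (hη i).le
      calc ‖(xl t i k - xg t) - η i • mApp (B t i k) (gradient (F i) (xl t i k))‖
          ≤ ‖xl t i k - xg t‖ + ‖η i • mApp (B t i k) (gradient (F i) (xl t i k))‖ :=
            norm_sub_le _ _
        _ ≤ k * (η i * G) + η i * G := add_le_add ihk hstep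
        _ = (k + 1 : ℕ) * (η i * G) := by push_cast; ring
  have hα0 : 0 < α := by
    rw [hα]
    apply Finset.sum_pos
    · intro i _
      have hτp : (0:ℝ) < τ i := by exact_mod_cast (hτ i)
      exact mul_pos (mul_pos (hw i) (hη i)) hτp
    · have : Nonempty (Fin M) := Fin.pos_iff_nonempty.mp (by omega)
      exact Finset.univ_nonempty
  set Eb : ℝ := L ^ 2 * Λ * G ^ 2 * ∑ i, w i * η i ^ 2 * (τ i : ℝ) ^ 2 with hEbdef
  -- per-round descent
  have hround : ∀ t, Fb (xg (t+1)) ≤ Fb (xg t) - α/2 * ‖gF (xg t)‖^2 + α/2 * Eb := by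
    intro t
    set g : (EuclideanSpace ℝ (Fin d)) := gF (xg t) with hgdef
    set h : (EuclideanSpace ℝ (Fin d)) := ∑ i, w i •
        ∑ k ∈ Finset.range (τ i), mApp (A t i k) (gradient (F i) (xl t i k)) with hhdef
    have hv : xg (t+1) = xg t + (-α) • h := by
      rw [hgrec t, neg_smul, ← sub_eq_add_neg]
    have hdesc := descent_lemma Fb L hL.le hFbdiff hgFLip (xg t) ((-α) • h)
    rw [← hv, hgradeq, real_inner_smul_right] at hdesc
    have hnv : ‖(-α) • h‖ ^ 2 = α ^ 2 * ‖h‖ ^ 2 := by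
      rw [norm_smul, Real.norm_eq_abs, abs_neg, abs_of_pos hα0, mul_pow]
    rw [hnv] at hdesc
    -- error bound
    have herr : ‖g - h‖ ^ 2 ≤ Eb := by
      have hgh : g - h = ∑ i, w i • (gradient (F i) (xg t)
          - ∑ k ∈ Finset.range (τ i), mApp (A t i k) (gradient (F i) (xl t i k))) := by
        rw [hgdef, hhdef, hgFdef]
        simp only [smul_sub]
        rw [Finset.sum_sub_distrib]
      rw [hgh]
      have hJ : ‖∑ i, w i • (gradient (F i) (xg t)
            - ∑ k ∈ Finset.range (τ i), mApp (A t i k) (gradient (F i) (xl t i k)))‖ ^ 2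
          ≤ ∑ i, w i * ‖gradient (F i) (xg t)
            - ∑ k ∈ Finset.range (τ i), mApp (A t i k) (gradient (F i) (xl t i k))‖ ^ 2 :=
        norm_sq_sum_smul_le Finset.univ w _ (fun i _ => (hw i).le) hw1
      refine hJ.trans ?_
      have hper : ∀ i, ‖gradient (F i) (xg t)
          - ∑ k ∈ Finset.range (τ i), mApp (A t i k) (gradient (F i) (xl t i k))‖ ^ 2
          ≤ Λ * L ^ 2 * η i ^ 2 * G ^ 2 * (τ i : ℝ) ^ 2 := by
        intro i
        have Ssum : ∑ k ∈ Finset.range (τ i), mApp (A t i k) = 1 := by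
          have hc := congrArg (Matrix.toEuclideanCLM (𝕜 := ℝ)) (hAsum t i)
          rw [map_sum, map_one] at hc
          exact hc
        set v : ℕ → (EuclideanSpace ℝ (Fin d)) := fun k =>
          gradient (F i) (xg t) - gradient (F i) (xl t i k) with hvdef
        have hrw : gradient (F i) (xg t)
            - ∑ k ∈ Finset.range (τ i), mApp (A t i k) (gradient (F i) (xl t i k))
            = ∑ k ∈ Finset.range (τ i), mApp (A t i k) (v k) := by
          have : ∀ k ∈ Finset.range (τ i), mApp (A t i k) (v k)
              = mApp (A t i k) (gradient (F i) (xg t))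
                - mApp (A t i k) (gradient (F i) (xl t i k)) := by
            intro k _; rw [hvdef]; exact map_sub _ _ _
          rw [Finset.sum_congr rfl this, Finset.sum_sub_distrib,
            ← ContinuousLinearMap.sum_apply, Ssum, ContinuousLinearMap.one_apply]
        rw [hrw]
        have hCS := norm_sq_sum_opApply_le (Finset.range (τ i))
          (fun k => mApp (A t i k)) v
          (fun k hk => mApp_selfAdjoint (hAsymm t i k (Finset.mem_range.mp hk)))
          (fun k hk => mApp_inner_nonneg (hApd t i k (Finset.mem_range.mp hk)).posSemidef)
          Ssum
        refine hCS.trans ?_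
        have hterm : ∀ k ∈ Finset.range (τ i),
            ⟪v k, mApp (A t i k) (v k)⟫ ≤ (Λ / τ i) * (L * (k * (η i * G))) ^ 2 := by
          intro k hk
          have hk' : k < τ i := Finset.mem_range.mp hk
          have hvb : ‖v k‖ ≤ L * (k * (η i * G)) := by
            rw [hvdef]
            calc ‖gradient (F i) (xg t) - gradient (F i) (xl t i k)‖
                ≤ L * ‖xg t - xl t i k‖ := hLip i _ _
              _ = L * ‖xl t i k - xg t‖ := by rw [norm_sub_rev]
              _ ≤ L * (k * (η i * G)) :=
                  mul_le_mul_of_nonneg_left (hdist t i k hk'.le) hL.le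
          have hvb0 : (0:ℝ) ≤ L * (k * (η i * G)) :=
            le_trans (norm_nonneg _) hvb
          calc ⟪v k, mApp (A t i k) (v k)⟫
              ≤ ‖v k‖ * ‖mApp (A t i k) (v k)‖ := real_inner_le_norm _ _
            _ ≤ ‖v k‖ * (opNorm (A t i k) * ‖v k‖) :=
                mul_le_mul_of_nonneg_left (ContinuousLinearMap.le_opNorm _ _) (norm_nonneg _)
            _ = opNorm (A t i k) * ‖v k‖ ^ 2 := by ring
            _ ≤ (Λ / τ i) * (L * (k * (η i * G))) ^ 2 := by
                apply mul_le_mul (hAop t i k hk')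
                  (by nlinarith [norm_nonneg (v k)]) (by positivity) ?_
                have : (0:ℝ) < τ i := by exact_mod_cast hτ i
                positivity
        refine (Finset.sum_le_sum hterm).trans ?_
        have hτpos : (0:ℝ) < τ i := by exact_mod_cast hτ i
        have hksum : ∑ k ∈ Finset.range (τ i), ((k:ℝ)) ^ 2 ≤ (τ i : ℝ) ^ 3 := by
          calc ∑ k ∈ Finset.range (τ i), ((k:ℝ)) ^ 2
              ≤ ∑ k ∈ Finset.range (τ i), ((τ i : ℝ)) ^ 2 := by
                apply Finset.sum_le_sum
                intro k hk
                have : (k:ℝ) ≤ τ i := by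
                  exact_mod_cast (Finset.mem_range.mp hk).le
                nlinarith [Nat.cast_nonneg (α := ℝ) k]
            _ = (τ i : ℝ) * (τ i : ℝ) ^ 2 := by
                rw [Finset.sum_const, Finset.card_range, nsmul_eq_mul]
            _ = (τ i : ℝ) ^ 3 := by ring
        calc ∑ k ∈ Finset.range (τ i), (Λ / τ i) * (L * (k * (η i * G))) ^ 2
            = (Λ / τ i) * (L ^ 2 * η i ^ 2 * G ^ 2)
              * ∑ k ∈ Finset.range (τ i), ((k:ℝ)) ^ 2 := by
              rw [Finset.mul_sum]
              exact Finset.sum_congr rfl fun k _ => by ring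
          _ ≤ (Λ / τ i) * (L ^ 2 * η i ^ 2 * G ^ 2) * (τ i : ℝ) ^ 3 := by
              apply mul_le_mul_of_nonneg_left hksum
              positivity
          _ = Λ * L ^ 2 * η i ^ 2 * G ^ 2 * (τ i : ℝ) ^ 2 := by
              field_simp
      calc ∑ i, w i * ‖gradient (F i) (xg t)
            - ∑ k ∈ Finset.range (τ i), mApp (A t i k) (gradient (F i) (xl t i k))‖ ^ 2
          ≤ ∑ i, w i * (Λ * L ^ 2 * η i ^ 2 * G ^ 2 * (τ i : ℝ) ^ 2) :=
            Finset.sum_le_sum fun i _ =>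
              mul_le_mul_of_nonneg_left (hper i) (hw i).le
        _ = Eb := by
            rw [hEbdef, Finset.mul_sum]
            exact Finset.sum_congr rfl fun i _ => by ring
    -- combine
    have hid : ⟪g, h⟫ = (‖g‖^2 + ‖h‖^2 - ‖g - h‖^2)/2 := by
      have := norm_sub_sq_real g h
      linarith
    rw [← hgdef, hid] at hdesc
    have hLa : L * α ^ 2 ≤ α := by nlinarith
    have h2 : L * α ^ 2 * ‖h‖ ^ 2 ≤ α * ‖h‖ ^ 2 :=
      mul_le_mul_of_nonneg_right hLa (sq_nonneg _)
    have h3 : α * ‖g - h‖ ^ 2 ≤ α * Eb := mul_le_mul_of_nonneg_left herr hα0.le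
    nlinarith [hdesc, h2, h3]
  -- telescope
  have htel : ∀ n : ℕ, Fb (xg n) + ∑ t ∈ Finset.range n, α/2 * ‖gF (xg t)‖^2
      ≤ Fb (xg 0) + n * (α/2 * Eb) := by
    intro n
    induction n with
    | zero => simp
    | succ n ih =>
      rw [Finset.sum_range_succ]
      have := hround n
      push_cast
      linarith
  have hT0 : (0:ℝ) < T := by exact_mod_cast hT
  have hS : ∑ t ∈ Finset.range T, ‖gF (xg t)‖^2
      ≤ 2/α * ((∑ i, w i * F i (xg 0)) - Finf) + T * Eb := by
    have h1 := htel T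
    have h2 : Finf ≤ Fb (xg T) := hFinf (xg T)
    have h3 : ∑ t ∈ Finset.range T, α/2 * ‖gF (xg t)‖^2
        = α/2 * ∑ t ∈ Finset.range T, ‖gF (xg t)‖^2 := by
      rw [Finset.mul_sum]
    rw [h3] at h1
    have h4 : α/2 * ∑ t ∈ Finset.range T, ‖gF (xg t)‖^2
        ≤ (Fb (xg 0) - Finf) + T * (α/2 * Eb) := by linarith
    have h5 : Fb (xg 0) = ∑ i, w i * F i (xg 0) := rfl
    rw [h5] at h4
    calc ∑ t ∈ Finset.range T, ‖gF (xg t)‖^2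
        = 2/α * (α/2 * ∑ t ∈ Finset.range T, ‖gF (xg t)‖^2) := by
          field_simp
      _ ≤ 2/α * (((∑ i, w i * F i (xg 0)) - Finf) + T * (α/2 * Eb)) :=
          mul_le_mul_of_nonneg_left h4 (by positivity)
      _ = 2/α * ((∑ i, w i * F i (xg 0)) - Finf) + T * Eb := by
          field_simp
  -- final algebra
  have hgoalrw : (∑ t ∈ Finset.range T, ‖gradient Fb (xg t)‖ ^ 2)
      = ∑ t ∈ Finset.range T, ‖gF (xg t)‖ ^ 2 :=
    Finset.sum_congr rfl fun t _ => by rw [hgradeq]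
  have hfinal : (1/T : ℝ) * ∑ t ∈ Finset.range T, ‖gF (xg t)‖^2
      ≤ (1/T : ℝ) * (2/α * ((∑ i, w i * F i (xg 0)) - Finf) + T * Eb) := by
    apply mul_le_mul_of_nonneg_left hS
    positivity
  have hTne : (T:ℝ) ≠ 0 := ne_of_gt hT0
  have hαne : α ≠ 0 := ne_of_gt hα0
  calc (1 / T : ℝ) * ∑ t ∈ Finset.range T, ‖gradient Fb (xg t)‖ ^ 2
      = (1/T : ℝ) * ∑ t ∈ Finset.range T, ‖gF (xg t)‖^2 := by rw [hgoalrw]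
    _ ≤ (1/T : ℝ) * (2/α * ((∑ i, w i * F i (xg 0)) - Finf) + T * Eb) := hfinal
    _ = 2 * ((∑ i, w i * F i (xg 0)) - Finf) / (α * T) + Eb := by
        field_simp
end
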